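/- arXiv:1307.3355 — 10 statements merged into one kernel-verified Lean document; each statement's English description precedes it below -/
import Mathlib

section
/- Let K₂ : ℝ × ℝ → ℝ be continuously differentiable and symmetric, i.e. K₂(s₁,s₂) = K₂(s₂,s₁) for all s₁,s₂. Define f(t,ω) = ∫_{t-ω}^{t} ∫_{t-ω}^{t} K₂(s₁,s₂) ds₁ ds₂. Then for all 0 < ω < t, the mixed second partial derivatives of f exist and K₂(t, t-ω) = ( ∂²f/∂t∂ω (t,ω) + ∂²f/∂ω² (t,ω) ) / 2. -/
/-!
Write `a = t - ω` and `g(a, b) = ∫_a^b K₂(a, s) ds`. Differentiating the square integral in its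
lower limit, symmetry of `K₂` makes the two edge contributions equal, so `∂f/∂ω (t, ω) = 2 g(a, t)`.
The function `g` is differentiable on `ℝ²`, being built from `(x, y) ↦ ∫_0^y K₂(x, s) ds`, whose
partial derivative in `x` is continuous; moreover `∂g/∂b (a, b) = K₂(a, b)`. Along
`(t, ω) ↦ (t - ω, t)` the chain rule gives `∂_t + ∂_ω = ∂_b`, so the sum of the two second
derivatives of `f` is `2 K₂(t - ω, t)`.
-/

open intervalIntegral ContinuousLinearMap

theorem hasFDerivAt_of_hasDerivAt_fst_of_continuousAt {g g₁ : ℝ × ℝ → ℝ} {g₂ : ℝ}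
    {p : ℝ × ℝ} (h₁ : ∀ q, HasDerivAt (fun x => g (x, q.2)) (g₁ q) q.1)
    (hg₁ : ContinuousAt g₁ p) (h₂ : HasDerivAt (fun y => g (p.1, y)) g₂ p.2) :
    HasFDerivAt g (g₁ p • fst ℝ ℝ ℝ + g₂ • snd ℝ ℝ ℝ) p := by
  have hsnd : HasFDerivAt (fun q : ℝ × ℝ => g (p.1, q.2)) (g₂ • snd ℝ ℝ ℝ) p :=
    h₂.comp_hasFDerivAt p hasFDerivAt_snd
  have hfst : HasFDerivAt (fun q => g q - g (p.1, q.2)) (g₁ p • fst ℝ ℝ ℝ) p := by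
    refine .of_isLittleO (Asymptotics.isLittleO_iff.mpr fun ε hε => ?_)
    obtain ⟨δ, hδ, hclose⟩ := Metric.continuousAt_iff.mp hg₁ ε hε
    filter_upwards [Metric.ball_mem_nhds p hδ] with q hq
    have hslice : ∀ x ∈ Set.uIcc p.1 q.1, ‖g₁ (x, q.2) - g₁ p‖ ≤ ε := by
      intro x hx
      refine (hclose ?_).le
      rw [Metric.mem_ball, Prod.dist_eq, max_lt_iff] at hq
      rw [Prod.dist_eq, max_lt_iff]
      refine ⟨lt_of_le_of_lt ?_ hq.1, hq.2⟩
      simpa [Real.dist_eq] using Set.abs_sub_left_of_mem_uIcc hx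
    have hmvt := Convex.norm_image_sub_le_of_norm_hasDerivWithin_le
      (f := fun x => g (x, q.2) - g₁ p * x) (fun x _ =>
        ((h₁ (x, q.2)).sub ((hasDerivAt_id x).const_mul (g₁ p))).hasDerivWithinAt)
      (by simpa using hslice) (convex_uIcc p.1 q.1) Set.left_mem_uIcc Set.right_mem_uIcc
    calc ‖g q - g (p.1, q.2) - (g p - g (p.1, p.2)) - (g₁ p • fst ℝ ℝ ℝ) (q - p)‖
        = ‖g (q.1, q.2) - g₁ p * q.1 - (g (p.1, q.2) - g₁ p * p.1)‖ := by
          simp only [Prod.mk.eta, sub_self, sub_zero, smul_apply, coe_fst', Prod.fst_sub,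
            smul_eq_mul]
          ring_nf
      _ ≤ ε * ‖q.1 - p.1‖ := by simpa using hmvt
      _ ≤ ε * ‖q - p‖ := by gcongr; exact norm_fst_le (q - p)
  simpa only [sub_add_cancel, Pi.add_def] using hfst.add hsnd

theorem hasDerivAt_intervalIntegral_of_hasDerivAt_fst {G G₁ : ℝ × ℝ → ℝ} (hG : Continuous G)
    (hG₁ : Continuous G₁) (hderiv : ∀ q, HasDerivAt (fun x => G (x, q.2)) (G₁ q) q.1)
    (a b x₀ : ℝ) :
    HasDerivAt (fun x => ∫ s in a..b, G (x, s)) (∫ s in a..b, G₁ (x₀, s)) x₀ := by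
  obtain ⟨C, hC⟩ : ∃ C, ∀ q ∈ Set.Icc (x₀ - 1) (x₀ + 1) ×ˢ Set.uIcc a b, ‖G₁ q‖ ≤ C :=
    (isCompact_Icc.prod isCompact_uIcc).exists_bound_of_continuousOn hG₁.continuousOn
  refine (hasDerivAt_integral_of_dominated_loc_of_deriv_le (F := fun x s => G (x, s))
    (F' := fun x s => G₁ (x, s)) (a := a) (b := b) (μ := MeasureTheory.volume)
    (bound := fun _ => C) (Metric.ball_mem_nhds x₀ one_pos) ?_ ?_ ?_ ?_
    intervalIntegrable_const ?_).2
  · exact .of_forall fun x => (by fun_prop : Continuous fun s => G (x, s)).aestronglyMeasurable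
  · exact (by fun_prop : Continuous fun s => G (x₀, s)).intervalIntegrable _ _
  · exact (by fun_prop : Continuous fun s => G₁ (x₀, s)).aestronglyMeasurable
  · refine .of_forall fun s hs x hx => hC (x, s) ⟨?_, Set.uIoc_subset_uIcc hs⟩
    rw [Metric.mem_ball, Real.dist_eq, abs_sub_lt_iff] at hx
    constructor <;> linarith
  · exact .of_forall fun s _ x _ => hderiv (x, s)

noncomputable def partialPrimitive (G : ℝ × ℝ → ℝ) (c : ℝ) (p : ℝ × ℝ) : ℝ :=
  ∫ s in c..p.2, G (p.1, s)

theorem continuous_partialPrimitive {G : ℝ × ℝ → ℝ} (hG : Continuous G) (c : ℝ) :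
    Continuous (partialPrimitive G c) :=
  continuous_parametric_intervalIntegral_of_continuous (f := fun p s => G (p.1, s))
    (by fun_prop) continuous_snd

theorem hasDerivAt_partialPrimitive_snd {G : ℝ × ℝ → ℝ} (hG : Continuous G) (c x y : ℝ) :
    HasDerivAt (fun y => partialPrimitive G c (x, y)) (G (x, y)) y :=
  ((by fun_prop : Continuous fun s => G (x, s)).integral_hasStrictDerivAt c y).hasDerivAt

theorem hasFDerivAt_partialPrimitive {G G₁ : ℝ × ℝ → ℝ} (hG : Continuous G)
    (hG₁ : Continuous G₁) (hderiv : ∀ q, HasDerivAt (fun x => G (x, q.2)) (G₁ q) q.1)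
    (c : ℝ) (p : ℝ × ℝ) :
    HasFDerivAt (partialPrimitive G c)
      (partialPrimitive G₁ c p • fst ℝ ℝ ℝ + G p • snd ℝ ℝ ℝ) p :=
  hasFDerivAt_of_hasDerivAt_fst_of_continuousAt
    (fun q => hasDerivAt_intervalIntegral_of_hasDerivAt_fst hG hG₁ hderiv c q.2 q.1)
    (continuous_partialPrimitive hG₁ c).continuousAt
    (hasDerivAt_partialPrimitive_snd hG c p.1 p.2)

theorem HasFDerivAt.hasDerivAt_comp_prodMk {φ : ℝ × ℝ → ℝ} {d₁ d₂ : ℝ} {u v : ℝ → ℝ}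
    {α β τ : ℝ} (hφ : HasFDerivAt φ (d₁ • fst ℝ ℝ ℝ + d₂ • snd ℝ ℝ ℝ) (u τ, v τ))
    (hu : HasDerivAt u α τ) (hv : HasDerivAt v β τ) :
    HasDerivAt (fun τ => φ (u τ, v τ)) (α * d₁ + β * d₂) τ :=
  (hφ.comp_hasDerivAt τ (hu.prodMk hv)).congr_deriv (by simp [mul_comm])

theorem hasDerivAt_integral_square_upper {K : ℝ × ℝ → ℝ} (hK : Continuous K) (c a : ℝ) :
    HasDerivAt (fun x => ∫ s in c..x, ∫ u in c..x, K (s, u))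
      ((∫ s in c..a, K (s, a)) + ∫ u in c..a, K (a, u)) a := by
  have hrect : HasFDerivAt (fun p : ℝ × ℝ => ∫ s in c..p.1, partialPrimitive K c (s, p.2))
      (partialPrimitive K c (a, a) • fst ℝ ℝ ℝ + (∫ s in c..a, K (s, a)) • snd ℝ ℝ ℝ) (a, a) := by
    have hP := continuous_partialPrimitive hK c
    refine hasFDerivAt_of_hasDerivAt_fst_of_continuousAt (fun q => ?_) hP.continuousAt ?_
    · exact ((by fun_prop : Continuous fun s => partialPrimitive K c (s, q.2))
        |>.integral_hasStrictDerivAt c q.1).hasDerivAt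
    · exact hasDerivAt_intervalIntegral_of_hasDerivAt_fst
        (G := fun q => partialPrimitive K c (q.2, q.1)) (by fun_prop) (by fun_prop)
        (fun q => hasDerivAt_partialPrimitive_snd hK c q.2 q.1) c a a
  simpa [partialPrimitive, add_comm] using
    hrect.hasDerivAt_comp_prodMk (hasDerivAt_id a) (hasDerivAt_id a)

theorem hasDerivAt_integral_square_lower {K : ℝ × ℝ → ℝ} (hK : Continuous K)
    (hsymm : ∀ s₁ s₂ : ℝ, K (s₁, s₂) = K (s₂, s₁)) (a b : ℝ) :
    HasDerivAt (fun x => ∫ s in x..b, ∫ u in x..b, K (s, u))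
      (-(2 * ∫ u in a..b, K (a, u))) a := by
  have hflip : (fun x => ∫ s in x..b, ∫ u in x..b, K (s, u))
      = fun x => ∫ s in b..x, ∫ u in b..x, K (s, u) := by
    funext x
    simp only [integral_symm x b, integral_neg, neg_neg]
  rw [hflip]
  refine (hasDerivAt_integral_square_upper hK b a).congr_deriv ?_
  simp only [hsymm _ a, integral_symm a b]
  ring

theorem hasFDerivAt_integral_param_lowerLimit {K K₁ : ℝ × ℝ → ℝ} (hK : Continuous K)
    (hK₁ : Continuous K₁) (hderiv : ∀ q, HasDerivAt (fun x => K (x, q.2)) (K₁ q) q.1)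
    (p : ℝ × ℝ) :
    HasFDerivAt (fun q : ℝ × ℝ => ∫ s in q.1..q.2, K (q.1, s))
      (((∫ s in p.1..p.2, K₁ (p.1, s)) - K (p.1, p.1)) • fst ℝ ℝ ℝ + K p • snd ℝ ℝ ℝ) p := by
  have hP := hasFDerivAt_partialPrimitive hK hK₁ hderiv 0
  have hdiag := (hP (p.1, p.1)).comp (f := fun q : ℝ × ℝ => (q.1, q.1)) p
    ((hasFDerivAt_fst (p := p)).prodMk (hasFDerivAt_fst (p := p)))
  have hsplit : (fun q : ℝ × ℝ => ∫ s in q.1..q.2, K (q.1, s))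
      = fun q => partialPrimitive K 0 q - partialPrimitive K 0 (q.1, q.1) := by
    funext q
    have hKq : Continuous fun s => K (q.1, s) := by fun_prop
    exact (integral_interval_sub_left (hKq.intervalIntegrable _ _)
      (hKq.intervalIntegrable _ _)).symm
  rw [hsplit]
  refine ((hP p).sub hdiag).congr_fderiv ?_
  have hK₁p : Continuous fun s => K₁ (p.1, s) := by fun_prop
  rw [← integral_interval_sub_left (hK₁p.intervalIntegrable 0 p.2)
    (hK₁p.intervalIntegrable 0 p.1)]
  ext
  · simp only [partialPrimitive, add_comp, smul_comp, fst_comp_prod, snd_comp_prod, sub_comp,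
      fst_comp_inl, snd_comp_inl, smul_zero, add_zero, sub_apply, smul_apply, id_apply,
      smul_eq_mul, mul_one, add_apply]
    ring
  · simp

theorem stmt0_general (K₂ : ℝ × ℝ → ℝ) (hK : ContDiff ℝ 1 K₂)
    (hsymm : ∀ s₁ s₂ : ℝ, K₂ (s₁, s₂) = K₂ (s₂, s₁))
    (f : ℝ → ℝ → ℝ)
    (hf : ∀ t ω : ℝ, f t ω = ∫ s₁ in (t - ω)..t, ∫ s₂ in (t - ω)..t, K₂ (s₁, s₂))
    (t ω : ℝ) :
    DifferentiableAt ℝ (fun t' => deriv (fun ω' => f t' ω') ω) t ∧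
    DifferentiableAt ℝ (fun ω' => deriv (fun ω'' => f t ω'') ω') ω ∧
    K₂ (t, t - ω) =
      (deriv (fun t' => deriv (fun ω' => f t' ω') ω) t +
        deriv (fun ω' => deriv (fun ω'' => f t ω'') ω') ω) / 2 := by
  have hderiv_ω : ∀ t' ω', deriv (fun ω'' => f t' ω'') ω'
      = 2 * ∫ s in (t' - ω')..t', K₂ (t' - ω', s) := by
    intro t' ω'
    have h := (hasDerivAt_integral_square_lower hK.continuous hsymm (t' - ω') t').comp ω'
      ((hasDerivAt_id' ω').const_sub t')
    simp only [hf]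
    simpa [Function.comp_def] using h.deriv
  have hg := hasFDerivAt_integral_param_lowerLimit hK.continuous
    ((hK.continuous_fderiv one_ne_zero).clm_apply continuous_const)
    (fun q => ((hK.differentiable one_ne_zero q).hasFDerivAt.comp_hasDerivAt q.1
      ((hasDerivAt_id' q.1).prodMk (hasDerivAt_const q.1 q.2))))
    (t - ω, t)
  have ht : HasDerivAt (fun t' => 2 * ∫ s in (t' - ω)..t', K₂ (t' - ω, s)) _ t :=
    (hg.hasDerivAt_comp_prodMk ((hasDerivAt_id' t).sub_const ω) (hasDerivAt_id' t)).const_mul 2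
  have hω : HasDerivAt (fun ω' => 2 * ∫ s in (t - ω')..t, K₂ (t - ω', s)) _ ω :=
    (hg.hasDerivAt_comp_prodMk ((hasDerivAt_id' ω).const_sub t)
      (hasDerivAt_const ω t)).const_mul 2
  simp only [hderiv_ω]
  refine ⟨ht.differentiableAt, hω.differentiableAt, ?_⟩
  rw [ht.deriv, hω.deriv, hsymm]
  ring

/-- Inversion formula for the quadratic Volterra kernel:
`K₂(t, t-ω) = (f''_{tω}(t,ω) + f''_{ωω}(t,ω)) / 2`, where `f(t,ω)` is the double
integral of the symmetric kernel `K₂` over the square `[t-ω,t] × [t-ω,t]`. -/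
theorem stmt0 (K₂ : ℝ × ℝ → ℝ) (hK : ContDiff ℝ 1 K₂)
    (hsymm : ∀ s₁ s₂ : ℝ, K₂ (s₁, s₂) = K₂ (s₂, s₁))
    (f : ℝ → ℝ → ℝ)
    (hf : ∀ t ω : ℝ, f t ω = ∫ s₁ in (t - ω)..t, ∫ s₂ in (t - ω)..t, K₂ (s₁, s₂))
    (t ω : ℝ) (hω : 0 < ω) (hωt : ω < t) :
    DifferentiableAt ℝ (fun t' => deriv (fun ω' => f t' ω') ω) t ∧
    DifferentiableAt ℝ (fun ω' => deriv (fun ω'' => f t ω'') ω') ω ∧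
    K₂ (t, t - ω) =
      (deriv (fun t' => deriv (fun ω' => f t' ω') ω) t +
        deriv (fun ω' => deriv (fun ω'' => f t ω'') ω') ω) / 2 :=
  stmt0_general K₂ hK hsymm f hf t ω
end

section
/- Let λ ≠ 0 be real and let y : [0,T] → ℝ be continuously differentiable with y(0) = 0 and 1 + 4λ·y(t) > 0 for all t ∈ [0,T]. Then the function x*(t) = y'(t) / √(1 + 4λ·y(t)) is continuous on [0,T] and is the unique continuous function x on [0,T] satisfying the quadratic Volterra equation of the first kind ∫₀ᵗ x(s) ds + λ·(∫₀ᵗ x(s) ds)² = y(t) for all t ∈ [0,T]. -/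
open Set intervalIntegral

/-!
Put `G(t) = ∫₀ᵗ x`. The equation says `G + λ G² = y`, a pointwise quadratic for `G`, so that
`(1 + 2λG)² = 1 + 4λy > 0`. Since `1 + 2λG` is continuous, never zero, and equals `1` at `t = 0`,
it is the positive square root `√(1 + 4λy)`; this determines `G` and hence `x = G'`.
Conversely, that root of the quadratic is differentiable with derivative `y' / √(1 + 4λy)`,
and the fundamental theorem of calculus shows that `x*` solves the equation.
-/

/-- The root `(√(1 + 4λy) - 1) / (2λ)` of `X + λX² = y`, rationalized so that `λ = 0` is allowed. -/
noncomputable def quadRoot (lam y : ℝ) : ℝ := 2 * y / (1 + √(1 + 4 * lam * y))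

section QuadRoot

variable {lam y : ℝ}

lemma quadRoot_add_mul_sq (h : 0 ≤ 1 + 4 * lam * y) :
    quadRoot lam y + lam * quadRoot lam y ^ 2 = y := by
  have hs := Real.sq_sqrt h
  have hne : 1 + √(1 + 4 * lam * y) ≠ 0 := by positivity
  unfold quadRoot
  set s := √(1 + 4 * lam * y)
  field_simp
  linear_combination (-y) * hs

lemma eq_quadRoot_of_add_mul_sq {F : ℝ} (hsol : F + lam * F ^ 2 = y)
    (hF : 0 ≤ 1 + 2 * lam * F) : F = quadRoot lam y := by
  have hroot : √(1 + 4 * lam * y) = 1 + 2 * lam * F := by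
    rw [← Real.sqrt_sq hF, ← hsol]
    ring_nf
  rw [quadRoot, hroot, eq_div_iff (by linarith)]
  linear_combination 2 * hsol

lemma hasDerivAt_quadRoot (h : 0 < 1 + 4 * lam * y) :
    HasDerivAt (quadRoot lam) (√(1 + 4 * lam * y))⁻¹ y := by
  have hs := Real.sq_sqrt h.le
  have hs0 := (Real.sqrt_pos.2 h).ne'
  have hne : 1 + √(1 + 4 * lam * y) ≠ 0 := by positivity
  have hinner : HasDerivAt (fun u => 1 + 4 * lam * u) (4 * lam) y := by
    simpa using ((hasDerivAt_id y).const_mul (4 * lam)).const_add 1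
  refine (((hasDerivAt_id' y).const_mul 2).fun_div ((hinner.sqrt h.ne').const_add 1)
    hne).congr_deriv ?_
  set s := √(1 + 4 * lam * y)
  field_simp
  linear_combination hs

lemma HasDerivWithinAt.quadRoot {f : ℝ → ℝ} {f' t : ℝ} {s : Set ℝ}
    (hf : HasDerivWithinAt f f' s t) (h : 0 < 1 + 4 * lam * f t) :
    HasDerivWithinAt (fun u => quadRoot lam (f u)) (f' / √(1 + 4 * lam * f t)) s t := by
  rw [div_eq_inv_mul]
  exact (hasDerivAt_quadRoot h).comp_hasDerivWithinAt t hf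

lemma IsPreconnected.eqOn_quadRoot {α : Type*} [TopologicalSpace α] {S : Set α}
    (hS : IsPreconnected S) {F f : α → ℝ} (hF : ContinuousOn F S) (hf : ContinuousOn f S)
    (hsol : ∀ t ∈ S, F t + lam * F t ^ 2 = f t) (hpos : ∀ t ∈ S, 0 < 1 + 4 * lam * f t)
    {a : α} (ha : a ∈ S) (hFa : F a = 0) :
    EqOn F (fun t => quadRoot lam (f t)) S := by
  have hroot : EqOn (fun t => 1 + 2 * lam * F t) (fun t => √(1 + 4 * lam * f t)) S := by
    refine hS.eq_of_sq_eq (by fun_prop) (by fun_prop) (fun t ht => ?_)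
      (fun ht => (Real.sqrt_pos.2 (hpos _ ht)).ne') ha ?_
    · simp only [Pi.pow_apply]
      rw [Real.sq_sqrt (hpos t ht).le, ← hsol t ht]
      ring
    · simp [← hsol a ha, hFa]
  intro t ht
  refine eq_quadRoot_of_add_mul_sq (hsol t ht) ?_
  exact (Real.sqrt_nonneg _).trans_eq (hroot ht).symm

end QuadRoot

section IntervalIntegral

variable {E : Type*} [NormedAddCommGroup E] [NormedSpace ℝ E] [CompleteSpace E] {a b t : ℝ}

lemma integral_eq_sub_of_hasDerivWithinAt_Icc {f f' : ℝ → E}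
    (hderiv : ∀ s ∈ Icc a b, HasDerivWithinAt f (f' s) (Icc a b) s)
    (hf' : ContinuousOn f' (Icc a b)) (ht : t ∈ Icc a b) :
    ∫ s in a..t, f' s = f t - f a := by
  have hsub : Icc a t ⊆ Icc a b := Icc_subset_Icc le_rfl ht.2
  refine integral_eq_sub_of_hasDeriv_right_of_le ht.1
    (fun s hs => ((hderiv s (hsub hs)).continuousWithinAt).mono hsub)
    (fun s hs => (hderiv s (hsub (Ioo_subset_Icc_self hs))).mono_of_mem_nhdsWithin
      (Icc_mem_nhdsGT_of_mem ⟨hs.1.le, hs.2.trans_le ht.2⟩))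
    ((hf'.mono hsub).intervalIntegrable_of_Icc ht.1)

lemma ContinuousOn.hasDerivWithinAt_integral_Icc {f : ℝ → E} (hab : a ≤ b)
    (hf : ContinuousOn f (Icc a b)) (ht : t ∈ Icc a b) :
    HasDerivWithinAt (fun u => ∫ s in a..u, f s) (f t) (Icc a b) t := by
  set g := IccExtend hab ((Icc a b).domRestrict f)
  have hg : Continuous g := (continuousOn_iff_continuous_domRestrict.1 hf).Icc_extend'
  have hfg : EqOn f g (Icc a b) := fun u hu =>
    (IccExtend_of_mem hab ((Icc a b).domRestrict f) hu).symm
  refine ((hg.integral_hasStrictDerivAt a t).hasDerivAt.hasDerivWithinAt.congr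
    (fun u hu => integral_congr (hfg.mono ?_)) (integral_congr (hfg.mono ?_))).congr_deriv
    (hfg ht).symm
  · exact uIcc_subset_Icc ⟨le_rfl, hab⟩ hu
  · exact uIcc_subset_Icc ⟨le_rfl, hab⟩ ht

end IntervalIntegral

theorem stmt1_general (T lam : ℝ) (hT : 0 < T)
    (y y' : ℝ → ℝ) (hy0 : y 0 = 0)
    (hy' : ∀ t ∈ Icc (0:ℝ) T, HasDerivWithinAt y (y' t) (Icc 0 T) t)
    (hy'c : ContinuousOn y' (Icc 0 T))
    (hpos : ∀ t ∈ Icc (0:ℝ) T, 0 < 1 + 4 * lam * y t) :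
    ContinuousOn (fun t => y' t / Real.sqrt (1 + 4 * lam * y t)) (Icc 0 T) ∧
    (∀ t ∈ Icc (0:ℝ) T,
      (∫ s in (0:ℝ)..t, y' s / Real.sqrt (1 + 4 * lam * y s)) +
        lam * (∫ s in (0:ℝ)..t, y' s / Real.sqrt (1 + 4 * lam * y s)) ^ 2 = y t) ∧
    (∀ x : ℝ → ℝ, ContinuousOn x (Icc 0 T) →
      (∀ t ∈ Icc (0:ℝ) T, (∫ s in (0:ℝ)..t, x s) + lam * (∫ s in (0:ℝ)..t, x s) ^ 2 = y t) →
      ∀ t ∈ Icc (0:ℝ) T, x t = y' t / Real.sqrt (1 + 4 * lam * y t)) := by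
  have hyc : ContinuousOn y (Icc 0 T) := fun t ht => (hy' t ht).continuousWithinAt
  have hG : ∀ t ∈ Icc 0 T, HasDerivWithinAt (fun u => quadRoot lam (y u))
      (y' t / √(1 + 4 * lam * y t)) (Icc 0 T) t := fun t ht => (hy' t ht).quadRoot (hpos t ht)
  have hxc : ContinuousOn (fun t => y' t / √(1 + 4 * lam * y t)) (Icc 0 T) :=
    hy'c.div (by fun_prop) fun t ht => (Real.sqrt_pos.2 (hpos t ht)).ne'
  have hint : ∀ t ∈ Icc 0 T, ∫ s in (0:ℝ)..t, y' s / √(1 + 4 * lam * y s) = quadRoot lam (y t) :=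
    fun t ht => by simp [integral_eq_sub_of_hasDerivWithinAt_Icc hG hxc ht, hy0, quadRoot]
  refine ⟨hxc, fun t ht => by rw [hint t ht]; exact quadRoot_add_mul_sq (hpos t ht).le, ?_⟩
  intro x hx hsol t ht
  have hF : ∀ t ∈ Icc 0 T, HasDerivWithinAt (fun u => ∫ s in (0:ℝ)..u, x s) (x t) (Icc 0 T) t :=
    fun t ht => hx.hasDerivWithinAt_integral_Icc hT.le ht
  have hFG := isPreconnected_Icc.eqOn_quadRoot (fun t ht => (hF t ht).continuousWithinAt) hyc
    hsol hpos (left_mem_Icc.2 hT.le) integral_same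
  exact (uniqueDiffOn_Icc hT t ht).eq_deriv _ (hF t ht) ((hG t ht).congr hFG (hFG ht))

/-- For `λ ≠ 0` and `y ∈ C¹[0,T]` with `y 0 = 0` and `1 + 4λ y(t) > 0` on `[0,T]`,
the function `x*(t) = y'(t)/√(1+4λ y(t))` is continuous on `[0,T]` and is the unique
continuous solution of `∫₀ᵗ x + λ (∫₀ᵗ x)² = y(t)` on `[0,T]`. -/
theorem stmt1 (T lam : ℝ) (hT : 0 < T) (hlam : lam ≠ 0)
    (y y' : ℝ → ℝ) (hy0 : y 0 = 0)
    (hy' : ∀ t ∈ Icc (0:ℝ) T, HasDerivWithinAt y (y' t) (Icc 0 T) t)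
    (hy'c : ContinuousOn y' (Icc 0 T))
    (hpos : ∀ t ∈ Icc (0:ℝ) T, 0 < 1 + 4 * lam * y t) :
    ContinuousOn (fun t => y' t / Real.sqrt (1 + 4 * lam * y t)) (Icc 0 T) ∧
    (∀ t ∈ Icc (0:ℝ) T,
      (∫ s in (0:ℝ)..t, y' s / Real.sqrt (1 + 4 * lam * y s)) +
        lam * (∫ s in (0:ℝ)..t, y' s / Real.sqrt (1 + 4 * lam * y s)) ^ 2 = y t) ∧
    (∀ x : ℝ → ℝ, ContinuousOn x (Icc 0 T) →
      (∀ t ∈ Icc (0:ℝ) T, (∫ s in (0:ℝ)..t, x s) + lam * (∫ s in (0:ℝ)..t, x s) ^ 2 = y t) →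
      ∀ t ∈ Icc (0:ℝ) T, x t = y' t / Real.sqrt (1 + 4 * lam * y t)) :=
  stmt1_general T lam hT y y' hy0 hy' hy'c hpos
end

section
/- Let T > 0 and let K₁(t,s) and K₂(t,s₁,s₂) be continuous on {0 ≤ s ≤ t ≤ T} and {0 ≤ s₁,s₂ ≤ t ≤ T} respectively, with continuous partial derivatives with respect to t, K₁(t,t) = 1 for all t ∈ [0,T], and K₂ symmetric in (s₁,s₂). Let y : [0,T] → ℝ be continuously differentiable with y(0) = 0, and let x : [0,T] → ℝ be continuous. Then x satisfies the quadratic Volterra equation of the first kind ∫₀ᵗ K₁(t,s)x(s) ds + ∫₀ᵗ∫₀ᵗ K₂(t,s₁,s₂)x(s₁)x(s₂) ds₁ds₂ = y(t) for all t ∈ [0,T] if and only if x satisfies the Volterra equation of the second kind x(t) + 2x(t)·∫₀ᵗ K₂(t,t,s)x(s) ds + ∫₀ᵗ ∂K₁/∂t(t,s)·x(s) ds + ∫₀ᵗ∫₀ᵗ ∂K₂/∂t(t,s₁,s₂)·x(s₁)x(s₂) ds₁ds₂ = y'(t) for all t ∈ [0,T]. -/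
/-!
Leibniz rule for `τ ↦ ∫ s in c..τ, f τ s` when `f` and `f' = ∂f/∂τ` are only given for `s ≤ τ`:
by the fundamental theorem of calculus `f τ s = f (max a s) s + ∫ u in max a s..τ, f' u s`,
and swapping the order of integration over the trapezoid `c ≤ s ≤ τ, max a s ≤ u ≤ τ` gives
`∫ s in c..τ, f τ s = ∫ s in c..a, f a s + ∫ u in a..τ, (f u u + ∫ s in c..u, f' u s)`.
Kernels given only on the simplex are first extended continuously to the whole space (Tietze).
Applied twice, once to the inner integral, the rule differentiates the double integral; the two
boundary terms coincide by the symmetry of `K₂`, and `K₁ t t = 1` produces the term `x t`.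
Both sides of the first-kind equation vanish at `0`, so they agree on `[0, T]` iff their
derivatives do, which is the second-kind equation.
-/

open Set intervalIntegral MeasureTheory Function

abbrev volterraDomain (c b : ℝ) : Set (ℝ × ℝ) := {p | c ≤ p.2 ∧ p.2 ≤ p.1 ∧ p.1 ≤ b}

abbrev volterraDomain₂ (c b : ℝ) : Set (ℝ × ℝ × ℝ) :=
  {p | c ≤ p.2.1 ∧ c ≤ p.2.2 ∧ p.2.1 ≤ p.1 ∧ p.2.2 ≤ p.1 ∧ p.1 ≤ b}

theorem ContinuousOn.exists_continuous_eqOn_of_isClosed {X : Type*} [TopologicalSpace X]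
    [NormalSpace X] {s : Set X} {f : X → ℝ} (hf : ContinuousOn f s) (hs : IsClosed s) :
    ∃ g : X → ℝ, Continuous g ∧ EqOn g f s := by
  obtain ⟨g, hg⟩ := ContinuousMap.exists_restrict_eq hs ⟨s.domRestrict f, hf.domRestrict⟩
  exact ⟨g, g.continuous, fun x hx => DFunLike.congr_fun hg ⟨x, hx⟩⟩

theorem integral_integral_max_swap {g : ℝ → ℝ → ℝ} (hg : Continuous (uncurry g))
    {a b c : ℝ} (hca : c ≤ a) (hab : a ≤ b) :
    ∫ s in c..b, ∫ u in max a s..b, g u s = ∫ u in a..b, ∫ s in c..u, g u s := by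
  set S : Set (ℝ × ℝ) := {p | max a p.1 < p.2}
  -- both sides are iterated integrals over the square `(c, b]²` of `g` cut off outside `S`
  let G : ℝ → ℝ → ℝ := fun s u => S.indicator (fun p => g p.2 p.1) (s, u)
  have hcb : c ≤ b := hca.trans hab
  have hG : IntegrableOn (uncurry G) (uIoc c b ×ˢ uIoc c b) :=
    ((ContinuousOn.integrableOn_compact (isCompact_uIcc.prod isCompact_uIcc)
      (by fun_prop : Continuous fun p : ℝ × ℝ => g p.2 p.1).continuousOn).mono_set
      (prod_mono uIoc_subset_uIcc uIoc_subset_uIcc)).indicator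
      (measurableSet_lt (by fun_prop) (by fun_prop))
  have hslice_s : ∀ s ∈ uIcc c b, ∫ u in c..b, G s u = ∫ u in max a s..b, g u s := by
    intro s hs
    rw [uIcc_of_le hcb] at hs
    have hGs : ∀ u, G s u = (Ioi (max a s)).indicator (g · s) u := fun u => rfl
    simp only [hGs, integral_of_le hcb, integral_of_le (max_le hab hs.2),
      setIntegral_indicator measurableSet_Ioi, Ioc_inter_Ioi,
      max_eq_right (hca.trans (le_max_left a s))]
  have hslice_u : ∀ u ∈ uIcc c b,
      ∫ s in c..b, G s u = (Ioi a).indicator (fun u => ∫ s in c..u, g u s) u := by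
    intro u hu
    rw [uIcc_of_le hcb] at hu
    by_cases hau : a < u
    · have hGu : ∀ s, G s u = (Iio u).indicator (g u ·) s := fun s => by
        simp [G, S, indicator, hau]
      have hset : Ioc c b ∩ Iio u = Ioo c u := by
        ext s; simp only [mem_inter_iff, mem_Ioc, mem_Iio, mem_Ioo]; grind
      simp only [hGu, integral_of_le hcb, integral_of_le hu.1, hset,
        setIntegral_indicator measurableSet_Iio, indicator_of_mem (mem_Ioi.2 hau),
        integral_Ioc_eq_integral_Ioo]
    · have hGu : ∀ s, G s u = 0 := fun s =>
        indicator_of_notMem (show (s, u) ∉ S from fun hp => hau ((le_max_left a s).trans_lt hp)) _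
      simp [hGu, hau]
  calc ∫ s in c..b, ∫ u in max a s..b, g u s = ∫ s in c..b, ∫ u in c..b, G s u :=
        (integral_congr hslice_s).symm
    _ = ∫ u in c..b, ∫ s in c..b, G s u := intervalIntegral_intervalIntegral_swap hG
    _ = ∫ u in c..b, (Ioi a).indicator (fun u => ∫ s in c..u, g u s) u :=
        integral_congr hslice_u
    _ = ∫ u in a..b, ∫ s in c..u, g u s := by
      rw [integral_of_le hcb, integral_of_le hab, setIntegral_indicator measurableSet_Ioi,
        Ioc_inter_Ioi, max_eq_right hca]

section Leibniz

variable {f f' : ℝ → ℝ → ℝ} {a b c : ℝ}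

theorem integral_param_eq_add_integral (hf : Continuous (uncurry f))
    (hf' : Continuous (uncurry f'))
    (hderiv : ∀ s τ, c ≤ s → max a s ≤ τ → τ ≤ b →
      HasDerivWithinAt (f · s) (f' τ s) (Icc (max a s) b) τ)
    {τ : ℝ} (hca : c ≤ a) (haτ : a ≤ τ) (hτb : τ ≤ b) :
    ∫ s in c..τ, f τ s = (∫ s in c..a, f a s) + ∫ u in a..τ, (f u u + ∫ s in c..u, f' u s) := by
  have hcτ : c ≤ τ := hca.trans haτ
  have hftc : ∀ s ∈ uIcc c τ, f τ s - f (max a s) s = ∫ u in max a s..τ, f' u s := by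
    intro s hs
    rw [uIcc_of_le hcτ] at hs
    have hm : max a s ≤ τ := max_le haτ hs.2
    refine (integral_eq_sub_of_hasDeriv_right_of_le hm
      (hf.comp₂ continuous_id continuous_const).continuousOn (fun u hu => ?_)
      ((hf'.comp₂ continuous_id continuous_const).intervalIntegrable _ _)).symm
    exact (hderiv s u hs.1 hu.1.le (hu.2.le.trans hτb)).mono_of_mem_nhdsWithin
      (Icc_mem_nhdsGT_of_mem ⟨hu.1.le, hu.2.trans_le hτb⟩)
  have hsplit : ∫ s in c..τ, f (max a s) s = (∫ s in c..a, f a s) + ∫ u in a..τ, f u u := by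
    have hcont : Continuous fun s => f (max a s) s :=
      hf.comp₂ (continuous_const.max continuous_id) continuous_id
    rw [← integral_add_adjacent_intervals (b := a) (hcont.intervalIntegrable _ _)
      (hcont.intervalIntegrable _ _)]
    congr 1
    · refine integral_congr fun s hs => ?_
      rw [uIcc_of_le hca] at hs
      rw [max_eq_left hs.2]
    · refine integral_congr fun s hs => ?_
      rw [uIcc_of_le haτ] at hs
      rw [max_eq_right hs.1]
  have hintegrable : ∀ {g : ℝ → ℝ} {p q : ℝ}, Continuous g → IntervalIntegrable g volume p q :=
    fun hg => hg.intervalIntegrable _ _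
  calc ∫ s in c..τ, f τ s
      = (∫ s in c..τ, f (max a s) s) + ∫ s in c..τ, (f τ s - f (max a s) s) := by
        rw [integral_sub
          (hintegrable (g := fun s => f τ s) (hf.comp₂ continuous_const continuous_id))
          (hintegrable (g := fun s => f (max a s) s)
            (hf.comp₂ (continuous_const.max continuous_id) continuous_id))]
        ring
    _ = (∫ s in c..a, f a s) + (∫ u in a..τ, f u u) + ∫ u in a..τ, ∫ s in c..u, f' u s := by
        rw [integral_congr hftc, integral_integral_max_swap hf' hca haτ, hsplit]
    _ = (∫ s in c..a, f a s) + ∫ u in a..τ, (f u u + ∫ s in c..u, f' u s) := by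
        rw [integral_add (hintegrable (g := fun u => f u u) (hf.comp₂ continuous_id continuous_id))
          (hintegrable (g := fun u => ∫ s in c..u, f' u s)
            (continuous_parametric_intervalIntegral_of_continuous hf' continuous_id)), add_assoc]

theorem hasDerivWithinAt_integral_param (hf : Continuous (uncurry f))
    (hf' : Continuous (uncurry f'))
    (hderiv : ∀ s τ, c ≤ s → max a s ≤ τ → τ ≤ b →
      HasDerivWithinAt (f · s) (f' τ s) (Icc (max a s) b) τ)
    (hca : c ≤ a) {t : ℝ} (ht : t ∈ Icc a b) :
    HasDerivWithinAt (fun τ => ∫ s in c..τ, f τ s) (f t t + ∫ s in c..t, f' t s) (Icc a b) t := by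
  have hΨ : Continuous fun u => f u u + ∫ s in c..u, f' u s :=
    (hf.comp₂ continuous_id continuous_id).add
      (continuous_parametric_intervalIntegral_of_continuous hf' continuous_id)
  exact (((hΨ.integral_hasStrictDerivAt a t).hasDerivAt.hasDerivWithinAt).const_add _).congr
    (fun τ hτ => integral_param_eq_add_integral hf hf' hderiv hca hτ.1 hτ.2)
    (integral_param_eq_add_integral hf hf' hderiv hca ht.1 ht.2)

end Leibniz

theorem hasDerivWithinAt_integral_param_of_continuousOn {f f' : ℝ → ℝ → ℝ} {b c t : ℝ}
    (hf : ContinuousOn (fun p : ℝ × ℝ => f p.1 p.2) (volterraDomain c b))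
    (hf' : ContinuousOn (fun p : ℝ × ℝ => f' p.1 p.2) (volterraDomain c b))
    (hderiv : ∀ s τ, c ≤ s → s ≤ τ → τ ≤ b → HasDerivWithinAt (f · s) (f' τ s) (Icc s b) τ)
    (ht : t ∈ Icc c b) :
    HasDerivWithinAt (fun τ => ∫ s in c..τ, f τ s) (f t t + ∫ s in c..t, f' t s) (Icc c b) t := by
  have hD : IsClosed (volterraDomain c b) := by
    simp only [volterraDomain, ofPred_and]
    apply_rules [IsClosed.inter, isClosed_le] <;> fun_prop
  obtain ⟨F, hF, hFf⟩ := hf.exists_continuous_eqOn_of_isClosed hD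
  obtain ⟨F', hF', hFf'⟩ := hf'.exists_continuous_eqOn_of_isClosed hD
  have hmem : ∀ {τ s}, τ ∈ Icc c b → s ∈ uIcc c τ → (τ, s) ∈ volterraDomain c b := by
    intro τ s hτ hs
    rw [uIcc_of_le hτ.1] at hs
    exact ⟨hs.1, hs.2, hτ.2⟩
  have hderivF : ∀ s τ, c ≤ s → max c s ≤ τ → τ ≤ b →
      HasDerivWithinAt (fun τ => F (τ, s)) (F' (τ, s)) (Icc (max c s) b) τ := by
    intro s τ hs hτ hτb
    rw [max_eq_right hs] at hτ ⊢
    rw [hFf' ⟨hs, hτ, hτb⟩]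
    exact (hderiv s τ hs hτ hτb).congr (fun u hu => hFf ⟨hs, hu.1, hu.2⟩) (hFf ⟨hs, hτ, hτb⟩)
  have hint : ∀ τ ∈ Icc c b, ∫ s in c..τ, F (τ, s) = ∫ s in c..τ, f τ s := fun τ hτ =>
    integral_congr fun s hs => hFf (hmem hτ hs)
  have := hasDerivWithinAt_integral_param (f := fun τ s => F (τ, s)) (f' := fun τ s => F' (τ, s))
    hF hF' hderivF le_rfl ht
  rw [hFf (hmem ht right_mem_uIcc), integral_congr fun s hs => hFf' (hmem ht hs)] at this
  exact this.congr (fun τ hτ => (hint τ hτ).symm) (hint t ht).symm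

theorem hasDerivWithinAt_integral_integral_param {k k' : ℝ → ℝ → ℝ → ℝ} {b c t : ℝ}
    (hk : Continuous fun p : ℝ × ℝ × ℝ => k p.1 p.2.1 p.2.2)
    (hk' : Continuous fun p : ℝ × ℝ × ℝ => k' p.1 p.2.1 p.2.2)
    (hderiv : ∀ s₁ s₂ τ, c ≤ s₁ → c ≤ s₂ → max s₁ s₂ ≤ τ → τ ≤ b →
      HasDerivWithinAt (k · s₁ s₂) (k' τ s₁ s₂) (Icc (max s₁ s₂) b) τ)
    (ht : t ∈ Icc c b) :
    HasDerivWithinAt (fun τ => ∫ s₁ in c..τ, ∫ s₂ in c..τ, k τ s₁ s₂)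
      ((∫ s in c..t, k t t s) + (∫ s in c..t, k t s t) +
        ∫ s₁ in c..t, ∫ s₂ in c..t, k' t s₁ s₂) (Icc c b) t := by
  have hg : Continuous (uncurry fun τ s₁ => ∫ s₂ in c..τ, k τ s₁ s₂) :=
    continuous_parametric_intervalIntegral_of_continuous (f := fun p s₂ => k p.1 p.2 s₂)
      (hk.comp₃ (by fun_prop) (by fun_prop) (by fun_prop)) continuous_fst
  have hg' : Continuous (uncurry fun τ s₁ => k τ s₁ τ + ∫ s₂ in c..τ, k' τ s₁ s₂) :=
    (hk.comp₃ continuous_fst continuous_snd continuous_fst).add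
      (continuous_parametric_intervalIntegral_of_continuous (f := fun p s₂ => k' p.1 p.2 s₂)
        (hk'.comp₃ (by fun_prop) (by fun_prop) (by fun_prop)) continuous_fst)
  have hinner : ∀ s₁ τ, c ≤ s₁ → max c s₁ ≤ τ → τ ≤ b →
      HasDerivWithinAt (fun τ => ∫ s₂ in c..τ, k τ s₁ s₂)
        (k τ s₁ τ + ∫ s₂ in c..τ, k' τ s₁ s₂) (Icc (max c s₁) b) τ := by
    intro s₁ τ hs₁ hτ hτb
    rw [max_eq_right hs₁] at hτ ⊢
    refine hasDerivWithinAt_integral_param (f := fun τ s₂ => k τ s₁ s₂)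
      (f' := fun τ s₂ => k' τ s₁ s₂)
      (hk.comp₃ continuous_fst continuous_const continuous_snd)
      (hk'.comp₃ continuous_fst continuous_const continuous_snd)
      (fun s₂ u hs₂ => hderiv s₁ s₂ u hs₁ hs₂) hs₁ ⟨hτ, hτb⟩
  have houter := hasDerivWithinAt_integral_param hg hg' hinner le_rfl ht
  have hk_int : IntervalIntegrable (fun s => k t s t) volume c t :=
    (hk.comp₃ continuous_const continuous_id continuous_const).intervalIntegrable _ _
  have hk'_int : IntervalIntegrable (fun s₁ => ∫ s₂ in c..t, k' t s₁ s₂) volume c t :=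
    (continuous_parametric_intervalIntegral_of_continuous' (f := fun s₁ s₂ => k' t s₁ s₂)
      (hk'.comp₃ continuous_const continuous_fst continuous_snd) c t).intervalIntegrable _ _
  rwa [integral_add hk_int hk'_int, ← add_assoc] at houter

theorem hasDerivWithinAt_integral_integral_param_of_continuousOn {k k' : ℝ → ℝ → ℝ → ℝ}
    {b c t : ℝ}
    (hk : ContinuousOn (fun p : ℝ × ℝ × ℝ => k p.1 p.2.1 p.2.2) (volterraDomain₂ c b))
    (hk' : ContinuousOn (fun p : ℝ × ℝ × ℝ => k' p.1 p.2.1 p.2.2) (volterraDomain₂ c b))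
    (hderiv : ∀ s₁ s₂ τ, c ≤ s₁ → c ≤ s₂ → s₁ ≤ τ → s₂ ≤ τ → τ ≤ b →
      HasDerivWithinAt (k · s₁ s₂) (k' τ s₁ s₂) (Icc (max s₁ s₂) b) τ)
    (ht : t ∈ Icc c b) :
    HasDerivWithinAt (fun τ => ∫ s₁ in c..τ, ∫ s₂ in c..τ, k τ s₁ s₂)
      ((∫ s in c..t, k t t s) + (∫ s in c..t, k t s t) +
        ∫ s₁ in c..t, ∫ s₂ in c..t, k' t s₁ s₂) (Icc c b) t := by
  have hD : IsClosed (volterraDomain₂ c b) := by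
    simp only [volterraDomain₂, ofPred_and]
    apply_rules [IsClosed.inter, isClosed_le] <;> fun_prop
  obtain ⟨K, hK, hKk⟩ := hk.exists_continuous_eqOn_of_isClosed hD
  obtain ⟨K', hK', hKk'⟩ := hk'.exists_continuous_eqOn_of_isClosed hD
  have hmem : ∀ {τ s₁ s₂}, τ ∈ Icc c b → s₁ ∈ uIcc c τ → s₂ ∈ uIcc c τ →
      (τ, s₁, s₂) ∈ volterraDomain₂ c b := by
    intro τ s₁ s₂ hτ hs₁ hs₂
    rw [uIcc_of_le hτ.1] at hs₁ hs₂
    exact ⟨hs₁.1, hs₂.1, hs₁.2, hs₂.2, hτ.2⟩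
  have hderivK : ∀ s₁ s₂ τ, c ≤ s₁ → c ≤ s₂ → max s₁ s₂ ≤ τ → τ ≤ b →
      HasDerivWithinAt (fun τ => K (τ, s₁, s₂)) (K' (τ, s₁, s₂)) (Icc (max s₁ s₂) b) τ := by
    intro s₁ s₂ τ hs₁ hs₂ hτ hτb
    have hmem' : ∀ u ∈ Icc (max s₁ s₂) b, (u, s₁, s₂) ∈ volterraDomain₂ c b := fun u hu =>
      ⟨hs₁, hs₂, (le_max_left _ _).trans hu.1, (le_max_right _ _).trans hu.1, hu.2⟩
    rw [hKk' (hmem' τ ⟨hτ, hτb⟩)]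
    exact (hderiv s₁ s₂ τ hs₁ hs₂ ((le_max_left _ _).trans hτ) ((le_max_right _ _).trans hτ)
      hτb).congr (fun u hu => hKk (hmem' u hu)) (hKk (hmem' τ ⟨hτ, hτb⟩))
  have hint : ∀ τ ∈ Icc c b, ∫ s₁ in c..τ, ∫ s₂ in c..τ, K (τ, s₁, s₂) =
      ∫ s₁ in c..τ, ∫ s₂ in c..τ, k τ s₁ s₂ := fun τ hτ =>
    integral_congr fun s₁ hs₁ => integral_congr fun s₂ hs₂ => hKk (hmem hτ hs₁ hs₂)
  have hct : t ∈ uIcc c t := right_mem_uIcc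
  have := hasDerivWithinAt_integral_integral_param (k := fun τ s₁ s₂ => K (τ, s₁, s₂))
    (k' := fun τ s₁ s₂ => K' (τ, s₁, s₂)) hK hK' hderivK ht
  rw [integral_congr fun s hs => hKk (hmem ht hct hs),
    integral_congr fun s hs => hKk (hmem ht hs hct),
    integral_congr fun s₁ hs₁ => integral_congr fun s₂ hs₂ => hKk' (hmem ht hs₁ hs₂)] at this
  exact this.congr (fun τ hτ => (hint τ hτ).symm) (hint t ht).symm

theorem hasDerivWithinAt_integral_kernel_mul {K K' : ℝ → ℝ → ℝ} {x : ℝ → ℝ} {b c t : ℝ}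
    (hK : ContinuousOn (fun p : ℝ × ℝ => K p.1 p.2) (volterraDomain c b))
    (hK' : ContinuousOn (fun p : ℝ × ℝ => K' p.1 p.2) (volterraDomain c b))
    (hderiv : ∀ s τ, c ≤ s → s ≤ τ → τ ≤ b → HasDerivWithinAt (K · s) (K' τ s) (Icc s b) τ)
    (hx : ContinuousOn x (Icc c b)) (ht : t ∈ Icc c b) :
    HasDerivWithinAt (fun τ => ∫ s in c..τ, K τ s * x s)
      (K t t * x t + ∫ s in c..t, K' t s * x s) (Icc c b) t := by
  have hxs : ContinuousOn (fun p : ℝ × ℝ => x p.2) (volterraDomain c b) :=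
    hx.comp continuous_snd.continuousOn fun p hp => ⟨hp.1, hp.2.1.trans hp.2.2⟩
  exact hasDerivWithinAt_integral_param_of_continuousOn (hK.mul hxs) (hK'.mul hxs)
    (fun s τ hs hsτ hτ => (hderiv s τ hs hsτ hτ).mul_const (x s)) ht

theorem hasDerivWithinAt_integral_integral_symm_kernel_mul {K K' : ℝ → ℝ → ℝ → ℝ}
    {x : ℝ → ℝ} {b c t : ℝ}
    (hK : ContinuousOn (fun p : ℝ × ℝ × ℝ => K p.1 p.2.1 p.2.2) (volterraDomain₂ c b))
    (hK' : ContinuousOn (fun p : ℝ × ℝ × ℝ => K' p.1 p.2.1 p.2.2) (volterraDomain₂ c b))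
    (hderiv : ∀ s₁ s₂ τ, c ≤ s₁ → c ≤ s₂ → s₁ ≤ τ → s₂ ≤ τ → τ ≤ b →
      HasDerivWithinAt (K · s₁ s₂) (K' τ s₁ s₂) (Icc (max s₁ s₂) b) τ)
    (hsymm : ∀ τ s₁ s₂, K τ s₁ s₂ = K τ s₂ s₁) (hx : ContinuousOn x (Icc c b))
    (ht : t ∈ Icc c b) :
    HasDerivWithinAt (fun τ => ∫ s₁ in c..τ, ∫ s₂ in c..τ, K τ s₁ s₂ * x s₁ * x s₂)
      (2 * x t * (∫ s in c..t, K t t s * x s) +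
        ∫ s₁ in c..t, ∫ s₂ in c..t, K' t s₁ s₂ * x s₁ * x s₂) (Icc c b) t := by
  have hx₁ : ContinuousOn (fun p : ℝ × ℝ × ℝ => x p.2.1) (volterraDomain₂ c b) :=
    hx.comp (by fun_prop : Continuous fun p : ℝ × ℝ × ℝ => p.2.1).continuousOn
      fun p hp => ⟨hp.1, hp.2.2.1.trans hp.2.2.2.2⟩
  have hx₂ : ContinuousOn (fun p : ℝ × ℝ × ℝ => x p.2.2) (volterraDomain₂ c b) :=
    hx.comp (by fun_prop : Continuous fun p : ℝ × ℝ × ℝ => p.2.2).continuousOn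
      fun p hp => ⟨hp.2.1, hp.2.2.2.1.trans hp.2.2.2.2⟩
  refine (hasDerivWithinAt_integral_integral_param_of_continuousOn
    (k := fun τ s₁ s₂ => K τ s₁ s₂ * x s₁ * x s₂) (k' := fun τ s₁ s₂ => K' τ s₁ s₂ * x s₁ * x s₂)
    ((hK.mul hx₁).mul hx₂) ((hK'.mul hx₁).mul hx₂)
    (fun s₁ s₂ τ hs₁ hs₂ h₁ h₂ hτ =>
      ((hderiv s₁ s₂ τ hs₁ hs₂ h₁ h₂ hτ).mul_const (x s₁)).mul_const (x s₂)) ht).congr_deriv ?_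
  have h₁ : ∀ s, K t t s * x t * x s = x t * (K t t s * x s) := fun s => by ring
  have h₂ : ∀ s, K t s t * x s * x t = x t * (K t t s * x s) := fun s => by rw [hsymm]; ring
  simp only [h₁, h₂, intervalIntegral.integral_const_mul]
  ring

theorem eqOn_iff_eqOn_of_hasDerivWithinAt {F G F' G' : ℝ → ℝ} {a b : ℝ} (hab : a < b)
    (hF : ∀ t ∈ Icc a b, HasDerivWithinAt F (F' t) (Icc a b) t)
    (hG : ∀ t ∈ Icc a b, HasDerivWithinAt G (G' t) (Icc a b) t) (ha : F a = G a) :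
    EqOn F G (Icc a b) ↔ EqOn F' G' (Icc a b) := by
  constructor
  · intro h t ht
    exact (uniqueDiffOn_Icc hab t ht).eq_deriv _
      ((hF t ht).congr (fun τ hτ => (h hτ).symm) (h ht).symm) (hG t ht)
  · intro h
    have hright : ∀ H H' : ℝ → ℝ, (∀ t ∈ Icc a b, HasDerivWithinAt H (H' t) (Icc a b) t) →
        ∀ t ∈ Ico a b, HasDerivWithinAt H (H' t) (Ici t) t := fun H H' hH t ht =>
      (hH t (Ico_subset_Icc_self ht)).mono_of_mem_nhdsWithin (Icc_mem_nhdsGE_of_mem ht)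
    exact eq_of_has_deriv_right_eq (hright F F' hF)
      (fun t ht => h (Ico_subset_Icc_self ht) ▸ hright G G' hG t ht)
      (fun t ht => (hF t ht).continuousWithinAt) (fun t ht => (hG t ht).continuousWithinAt) ha

theorem stmt2_general (T : ℝ) (hT : 0 < T)
    (K₁ K₁t : ℝ → ℝ → ℝ) (K₂ K₂t : ℝ → ℝ → ℝ → ℝ)
    (hK₁ : ContinuousOn (fun p : ℝ × ℝ => K₁ p.1 p.2) {p | 0 ≤ p.2 ∧ p.2 ≤ p.1 ∧ p.1 ≤ T})
    (hK₁d : ∀ s t : ℝ, 0 ≤ s → s ≤ t → t ≤ T →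
      HasDerivWithinAt (fun τ => K₁ τ s) (K₁t t s) (Icc s T) t)
    (hK₁tc : ContinuousOn (fun p : ℝ × ℝ => K₁t p.1 p.2) {p | 0 ≤ p.2 ∧ p.2 ≤ p.1 ∧ p.1 ≤ T})
    (hK₂ : ContinuousOn (fun p : ℝ × ℝ × ℝ => K₂ p.1 p.2.1 p.2.2)
      {p | 0 ≤ p.2.1 ∧ 0 ≤ p.2.2 ∧ p.2.1 ≤ p.1 ∧ p.2.2 ≤ p.1 ∧ p.1 ≤ T})
    (hK₂d : ∀ s₁ s₂ t : ℝ, 0 ≤ s₁ → 0 ≤ s₂ → s₁ ≤ t → s₂ ≤ t → t ≤ T →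
      HasDerivWithinAt (fun τ => K₂ τ s₁ s₂) (K₂t t s₁ s₂) (Icc (max s₁ s₂) T) t)
    (hK₂tc : ContinuousOn (fun p : ℝ × ℝ × ℝ => K₂t p.1 p.2.1 p.2.2)
      {p | 0 ≤ p.2.1 ∧ 0 ≤ p.2.2 ∧ p.2.1 ≤ p.1 ∧ p.2.2 ≤ p.1 ∧ p.1 ≤ T})
    (hdiag : ∀ t ∈ Icc (0:ℝ) T, K₁ t t = 1)
    (hsymm : ∀ t s₁ s₂ : ℝ, K₂ t s₁ s₂ = K₂ t s₂ s₁)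
    (y y' : ℝ → ℝ) (hy0 : y 0 = 0)
    (hy' : ∀ t ∈ Icc (0:ℝ) T, HasDerivWithinAt y (y' t) (Icc 0 T) t)
    (x : ℝ → ℝ) (hx : ContinuousOn x (Icc 0 T)) :
    (∀ t ∈ Icc (0:ℝ) T,
        (∫ s in (0:ℝ)..t, K₁ t s * x s) +
          (∫ s₁ in (0:ℝ)..t, ∫ s₂ in (0:ℝ)..t, K₂ t s₁ s₂ * x s₁ * x s₂) = y t) ↔
    (∀ t ∈ Icc (0:ℝ) T,
        x t + 2 * x t * (∫ s in (0:ℝ)..t, K₂ t t s * x s) +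
          (∫ s in (0:ℝ)..t, K₁t t s * x s) +
          (∫ s₁ in (0:ℝ)..t, ∫ s₂ in (0:ℝ)..t, K₂t t s₁ s₂ * x s₁ * x s₂) = y' t) := by
  refine eqOn_iff_eqOn_of_hasDerivWithinAt hT (fun t ht => ?_) hy' (by simp [hy0])
  refine ((hasDerivWithinAt_integral_kernel_mul hK₁ hK₁tc hK₁d hx ht).add
    (hasDerivWithinAt_integral_integral_symm_kernel_mul hK₂ hK₂tc hK₂d hsymm hx ht)).congr_deriv ?_
  rw [hdiag t ht, one_mul]
  ring

/-- Equivalence of the quadratic Volterra equation of the first kind with the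
Volterra equation of the second kind obtained by differentiation, given
`K₁(t,t) = 1` and the symmetry of `K₂` in `(s₁,s₂)`. -/
theorem stmt2 (T : ℝ) (hT : 0 < T)
    (K₁ K₁t : ℝ → ℝ → ℝ) (K₂ K₂t : ℝ → ℝ → ℝ → ℝ)
    (hK₁ : ContinuousOn (fun p : ℝ × ℝ => K₁ p.1 p.2) {p | 0 ≤ p.2 ∧ p.2 ≤ p.1 ∧ p.1 ≤ T})
    (hK₁d : ∀ s t : ℝ, 0 ≤ s → s ≤ t → t ≤ T →
      HasDerivWithinAt (fun τ => K₁ τ s) (K₁t t s) (Icc s T) t)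
    (hK₁tc : ContinuousOn (fun p : ℝ × ℝ => K₁t p.1 p.2) {p | 0 ≤ p.2 ∧ p.2 ≤ p.1 ∧ p.1 ≤ T})
    (hK₂ : ContinuousOn (fun p : ℝ × ℝ × ℝ => K₂ p.1 p.2.1 p.2.2)
      {p | 0 ≤ p.2.1 ∧ 0 ≤ p.2.2 ∧ p.2.1 ≤ p.1 ∧ p.2.2 ≤ p.1 ∧ p.1 ≤ T})
    (hK₂d : ∀ s₁ s₂ t : ℝ, 0 ≤ s₁ → 0 ≤ s₂ → s₁ ≤ t → s₂ ≤ t → t ≤ T →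
      HasDerivWithinAt (fun τ => K₂ τ s₁ s₂) (K₂t t s₁ s₂) (Icc (max s₁ s₂) T) t)
    (hK₂tc : ContinuousOn (fun p : ℝ × ℝ × ℝ => K₂t p.1 p.2.1 p.2.2)
      {p | 0 ≤ p.2.1 ∧ 0 ≤ p.2.2 ∧ p.2.1 ≤ p.1 ∧ p.2.2 ≤ p.1 ∧ p.1 ≤ T})
    (hdiag : ∀ t ∈ Icc (0:ℝ) T, K₁ t t = 1)
    (hsymm : ∀ t s₁ s₂ : ℝ, K₂ t s₁ s₂ = K₂ t s₂ s₁)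
    (y y' : ℝ → ℝ) (hy0 : y 0 = 0)
    (hy' : ∀ t ∈ Icc (0:ℝ) T, HasDerivWithinAt y (y' t) (Icc 0 T) t)
    (hy'c : ContinuousOn y' (Icc 0 T))
    (x : ℝ → ℝ) (hx : ContinuousOn x (Icc 0 T)) :
    (∀ t ∈ Icc (0:ℝ) T,
        (∫ s in (0:ℝ)..t, K₁ t s * x s) +
          (∫ s₁ in (0:ℝ)..t, ∫ s₂ in (0:ℝ)..t, K₂ t s₁ s₂ * x s₁ * x s₂) = y t) ↔
    (∀ t ∈ Icc (0:ℝ) T,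
        x t + 2 * x t * (∫ s in (0:ℝ)..t, K₂ t t s * x s) +
          (∫ s in (0:ℝ)..t, K₁t t s * x s) +
          (∫ s₁ in (0:ℝ)..t, ∫ s₂ in (0:ℝ)..t, K₂t t s₁ s₂ * x s₁ * x s₂) = y' t) :=
  stmt2_general T hT K₁ K₁t K₂ K₂t hK₁ hK₁d hK₁tc hK₂ hK₂d hK₂tc hdiag hsymm y y' hy0 hy' x hx
end

section
/- For every real y with |y| < 1/e, the series g(y) = Σ_{k=1}^{∞} ((-k)^{k-1} / k!) · y^k converges absolutely, and its sum satisfies g(y)·e^{g(y)} = y. -/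
/-!
Expanding `(x e^x)^(k+1) = x^(k+1) e^((k+1)x)` turns `g (x e^x)` into an absolutely convergent
double series; grouped by total degree, the coefficient of `x^(m+1)` is
`(1/(m+1)!) Σ_k (-1)^k C(m+1,k) (k+1)^m`, which is an `(m+1)`-st finite difference of a polynomial
of degree `m`, hence zero for `m ≥ 1`. So `g (x e^x) = x` for small `x`. Since `x ↦ x e^x` is a
local diffeomorphism at `0`, `g y e^(g y) = y` for `y` near `0`, and because `g` is analytic on
the disc `|y| < 1/e` (where `|(-k)^(k-1)/k!| ≤ e^k` makes the series converge), the identity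
theorem extends this to the whole disc.
-/

open Finset Real Filter Topology
open scoped Nat

theorem sum_range_alternating_choose_mul_add_one_pow_eq_zero {R : Type*} [CommRing R]
    {n j : ℕ} (hj : j < n) :
    ∑ k ∈ range (n + 1), (-1 : R) ^ k * n.choose k * ((k : R) + 1) ^ j = 0 := by
  have h := fwdDiff_iter_eq_sum_shift (h := (1 : R)) (fun r : R => r ^ j) n 1
  rw [fwdDiff_iter_pow_eq_zero_of_lt hj, Pi.zero_apply] at h
  have hsign : ∀ k ∈ range (n + 1), (-1 : R) ^ k * n.choose k * ((k : R) + 1) ^ j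
      = (-1) ^ n * (((-1 : ℤ) ^ (n - k) * n.choose k) • (1 + k • (1 : R)) ^ j) := by
    intro k hk
    have hn : n + (n - k) = k + 2 * (n - k) := by have := mem_range.mp hk; omega
    have key : (-1 : R) ^ n * (-1) ^ (n - k) = (-1) ^ k := by
      rw [← pow_add, hn, pow_add, pow_mul, neg_one_sq, one_pow, mul_one]
    rw [zsmul_eq_mul, nsmul_one]
    push_cast
    linear_combination (-(n.choose k : R)) * (1 + k) ^ j * key
  rw [sum_congr rfl hsign, ← mul_sum, ← h, mul_zero]

theorem HasSum.sum_antidiagonal {α A : Type*} [AddCommMonoid α] [TopologicalSpace α]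
    [ContinuousAdd α] [RegularSpace α] [AddCommMonoid A] [HasAntidiagonal A]
    {f : A × A → α} {a : α} (hf : HasSum f a) :
    HasSum (fun n => ∑ p ∈ antidiagonal n, f p) a :=
  (HasAntidiagonal.sigmaAntidiagonalEquivProd.hasSum_iff.mpr hf).sigma fun n =>
    (antidiagonal n).hasSum f

theorem hasSum_mul_pow_mul_exp (c x : ℝ) (k : ℕ) :
    HasSum (fun n => c * x ^ (k + 1) * ((k + 1) * x) ^ n / n !) (c * (x * exp x) ^ (k + 1)) := by
  have hexp : (x * exp x) ^ (k + 1) = x ^ (k + 1) * exp ((k + 1) * x) := by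
    rw [mul_pow, ← exp_nat_mul]
    push_cast
    ring_nf
  rw [hexp, ← mul_assoc, exp_eq_exp_ℝ]
  simpa only [mul_div_assoc] using
    (NormedSpace.expSeries_div_hasSum_exp ((k + 1) * x)).mul_left (c * x ^ (k + 1))

/-- `lambertCoeff k` is the coefficient `(-n)^(n-1)/n!` of `y^n` in the Lambert series, `n = k + 1`. -/
noncomputable def lambertCoeff (k : ℕ) : ℝ := (-(k + 1 : ℝ)) ^ k / ((k + 1)! : ℝ)

noncomputable def lambertSeries (y : ℝ) : ℝ := ∑' k, lambertCoeff k * y ^ (k + 1)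

theorem abs_lambertCoeff_le (k : ℕ) : |lambertCoeff k| ≤ exp 1 ^ (k + 1) := by
  rw [← exp_nat_mul, mul_one, lambertCoeff, abs_div, abs_pow, abs_neg, Nat.abs_cast,
    abs_of_nonneg (by positivity)]
  calc ((k : ℝ) + 1) ^ k / (k + 1)! ≤ ((k : ℝ) + 1) ^ (k + 1) / (k + 1)! := by
        gcongr
        · linarith
        · omega
    _ ≤ exp ((k + 1 : ℕ) : ℝ) := by
        push_cast
        exact pow_div_factorial_le_exp (x := (k : ℝ) + 1) (by positivity) _

theorem summable_abs_lambertCoeff_mul_pow {t : ℝ} (ht : |t| < 1 / exp 1) :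
    Summable fun k => |lambertCoeff k * t ^ (k + 1)| := by
  have hq : exp 1 * |t| < 1 := by rwa [lt_div_iff₀ (exp_pos 1), mul_comm] at ht
  refine .of_nonneg_of_le (fun k => abs_nonneg _) (fun k => ?_)
    ((summable_nat_add_iff 1).mpr (summable_geometric_of_lt_one (by positivity) hq))
  rw [abs_mul, abs_pow, mul_pow]
  gcongr
  exact abs_lambertCoeff_le k

theorem lambertCoeff_mul_pow_div_factorial {k l n : ℕ} (h : k + l = n + 1) :
    lambertCoeff k * ((k : ℝ) + 1) ^ l / l ! =
      (-1) ^ k * (n + 1).choose k * ((k : ℝ) + 1) ^ n / (n + 1)! := by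
  have hfac : ((n + 1).choose k : ℝ) * k ! * l ! = (n + 1)! := by
    rw [← h, add_comm k l, mul_right_comm]
    exact_mod_cast Nat.add_choose_mul_factorial_mul_factorial l k
  have hpow : ((k : ℝ) + 1) ^ k * ((k : ℝ) + 1) ^ l = ((k : ℝ) + 1) * ((k : ℝ) + 1) ^ n := by
    rw [← pow_add, h, pow_succ']
  have hC : ((n + 1).choose k : ℝ) ≠ 0 := by
    exact_mod_cast (Nat.choose_pos (by omega)).ne'
  rw [lambertCoeff, neg_pow, ← hfac, Nat.factorial_succ]
  push_cast
  field_simp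
  linear_combination hpow

theorem sum_antidiagonal_lambertCoeff_mul_pow_div_factorial (n : ℕ) :
    ∑ p ∈ antidiagonal (n + 1), lambertCoeff p.1 * ((p.1 : ℝ) + 1) ^ p.2 / p.2 ! = 0 := by
  rw [sum_congr rfl fun p hp => lambertCoeff_mul_pow_div_factorial (mem_antidiagonal.mp hp),
    Nat.sum_antidiagonal_eq_sum_range_succ_mk, ← sum_div,
    sum_range_alternating_choose_mul_add_one_pow_eq_zero (Nat.lt_succ_self n), zero_div]

theorem ofReal_one_div_exp_le_radius_ofScalars_lambertCoeff :
    ENNReal.ofReal (1 / exp 1) ≤ (FormalMultilinearSeries.ofScalars ℝ lambertCoeff).radius := by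
  refine FormalMultilinearSeries.le_radius_of_bound _ (exp 1) fun n => ?_
  rw [FormalMultilinearSeries.ofScalars_norm, Real.norm_eq_abs,
    Real.coe_toNNReal _ (by positivity)]
  calc |lambertCoeff n| * (1 / exp 1) ^ n ≤ exp 1 ^ (n + 1) * (1 / exp 1) ^ n := by
        gcongr
        exact abs_lambertCoeff_le n
    _ = exp 1 := by rw [div_pow, one_pow, pow_succ]; field_simp

theorem lambertSeries_eq_mul_ofScalarsSum (y : ℝ) :
    lambertSeries y = y * FormalMultilinearSeries.ofScalarsSum lambertCoeff y := by
  rw [lambertSeries, FormalMultilinearSeries.ofScalars_sum_eq, ← tsum_mul_left]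
  exact tsum_congr fun k => by rw [smul_eq_mul, pow_succ]; ring

theorem analyticOnNhd_lambertSeries :
    AnalyticOnNhd ℝ lambertSeries (Metric.ball 0 (1 / exp 1)) := by
  have hr := ofReal_one_div_exp_le_radius_ofScalars_lambertCoeff
  have hsum : AnalyticOnNhd ℝ (FormalMultilinearSeries.ofScalarsSum (E := ℝ) lambertCoeff)
      (Metric.ball 0 (1 / exp 1)) := by
    rw [← Metric.eball_ofReal]
    exact ((FormalMultilinearSeries.hasFPowerSeriesOnBall _
      ((ENNReal.ofReal_pos.mpr (by positivity)).trans_le hr)).analyticOnNhd).mono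
      (Metric.eball_subset_eball hr)
  rw [funext lambertSeries_eq_mul_ofScalarsSum]
  exact analyticOnNhd_id.mul hsum

/-- The terms of `lambertSeries (x * exp x)` after expanding `exp ((k + 1) * x)`. -/
noncomputable def lambertDoubleTerm (x : ℝ) (p : ℕ × ℕ) : ℝ :=
  lambertCoeff p.1 * x ^ (p.1 + 1) * ((p.1 + 1) * x) ^ p.2 / p.2 !

theorem summable_lambertDoubleTerm {x : ℝ} (hx : |x| * exp |x| < 1 / exp 1) :
    Summable (lambertDoubleTerm x) := by
  have habs (k n : ℕ) : |lambertDoubleTerm x (k, n)|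
      = |lambertCoeff k| * |x| ^ (k + 1) * ((k + 1) * |x|) ^ n / n ! := by
    simp only [lambertDoubleTerm, abs_div, abs_mul, abs_pow, Nat.abs_cast]
    rw [abs_of_nonneg (by positivity : (0 : ℝ) ≤ k + 1)]
  have hrow (k : ℕ) := hasSum_mul_pow_mul_exp |lambertCoeff k| |x| k
  simp only [← habs] at hrow
  refine .of_abs ((summable_prod_of_nonneg fun _ => abs_nonneg _).mpr
    ⟨fun k => (hrow k).summable, ?_⟩)
  refine (summable_abs_lambertCoeff_mul_pow (t := |x| * exp |x|) ?_).congr fun k => ?_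
  · rwa [abs_of_nonneg (by positivity)]
  · rw [(hrow k).tsum_eq, abs_mul, abs_of_nonneg (a := (|x| * exp |x|) ^ (k + 1)) (by positivity)]

theorem sum_antidiagonal_lambertDoubleTerm (x : ℝ) (m : ℕ) :
    ∑ p ∈ antidiagonal m, lambertDoubleTerm x p = if m = 0 then x else 0 := by
  have hterm : ∀ p ∈ antidiagonal m, lambertDoubleTerm x p
      = lambertCoeff p.1 * ((p.1 : ℝ) + 1) ^ p.2 / p.2 ! * x ^ (m + 1) := by
    intro p hp
    rw [← mem_antidiagonal.mp hp, lambertDoubleTerm, mul_pow]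
    ring
  rw [sum_congr rfl hterm, ← sum_mul]
  cases m with
  | zero => simp [lambertCoeff]
  | succ n =>
    rw [sum_antidiagonal_lambertCoeff_mul_pow_div_factorial, zero_mul, if_neg n.succ_ne_zero]

theorem lambertSeries_mul_exp_self {x : ℝ} (hx : |x| * exp |x| < 1 / exp 1) :
    lambertSeries (x * exp x) = x := by
  have h := (summable_lambertDoubleTerm hx).hasSum
  have hdiag := h.sum_antidiagonal
  simp only [sum_antidiagonal_lambertDoubleTerm] at hdiag
  rw [← (hasSum_ite_eq 0 x).unique hdiag] at h
  exact (h.prod_fiberwise fun k => hasSum_mul_pow_mul_exp (lambertCoeff k) x k).tsum_eq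

theorem lambertSeries_mul_exp_lambertSeries {y : ℝ} (hy : |y| < 1 / exp 1) :
    lambertSeries y * exp (lambertSeries y) = y := by
  have hstrict : HasStrictDerivAt (fun x => x * exp x) 1 0 := by
    have h := (hasStrictDerivAt_id (0 : ℝ)).fun_mul (hasStrictDerivAt_exp 0)
    rwa [exp_zero, id, mul_one, zero_mul, add_zero] at h
  have hsmall : ∀ᶠ x in 𝓝 0, |x| * exp |x| < 1 / exp 1 :=
    (continuous_abs.mul (continuous_exp.comp continuous_abs)).continuousAt.eventually_lt
      continuousAt_const (by simp; positivity)
  have hnear : (fun y => lambertSeries y * exp (lambertSeries y)) =ᶠ[𝓝 0] fun y => y := by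
    have hmap := hstrict.map_nhds_eq one_ne_zero
    rw [zero_mul] at hmap
    rw [EventuallyEq, ← hmap, eventually_map]
    filter_upwards [hsmall] with x hx
    rw [lambertSeries_mul_exp_self hx]
  exact (analyticOnNhd_lambertSeries.mul analyticOnNhd_lambertSeries.rexp)
    |>.eqOn_of_preconnected_of_eventuallyEq analyticOnNhd_id (convex_ball _ _).isPreconnected
      (Metric.mem_ball_self (by positivity)) hnear (mem_ball_zero_iff.mpr hy)

/-- The power series `Σ_{k≥1} ((-k)^{k-1}/k!) yᵏ` of the main branch of the Lambert
function converges absolutely for `|y| < 1/e` and its sum `g` satisfies `g e^g = y`. -/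
theorem stmt7 (y : ℝ) (hy : |y| < 1 / Real.exp 1) :
    Summable (fun k : ℕ =>
      |(-(k + 1 : ℝ)) ^ k / ((Nat.factorial (k + 1) : ℝ)) * y ^ (k + 1)|) ∧
    (∑' k : ℕ, (-(k + 1 : ℝ)) ^ k / ((Nat.factorial (k + 1) : ℝ)) * y ^ (k + 1)) *
        Real.exp (∑' k : ℕ,
          (-(k + 1 : ℝ)) ^ k / ((Nat.factorial (k + 1) : ℝ)) * y ^ (k + 1)) = y :=
  ⟨summable_abs_lambertCoeff_mul_pow hy, lambertSeries_mul_exp_lambertSeries hy⟩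
end

section
/- Let y : [0,T] → ℝ be continuous with y(0) = 0 and y(t) > -1/e for all t ∈ [0,T]. If Θ : [0,T] → ℝ is continuous with Θ(0) = 0 and Θ(t)·e^{Θ(t)} = y(t) for all t ∈ [0,T], then Θ(t) > -1 for all t ∈ [0,T]; consequently any two continuous functions Θ₁, Θ₂ on [0,T] with Θᵢ(0) = 0 and Θᵢ(t)·e^{Θᵢ(t)} = y(t) coincide. -/
/-!
Since `x eˣ` attains its minimum `-1/e` only at `x = -1`, the condition `Θ eᶿ = y > -1/e` keeps
the continuous function `Θ` away from `-1`; starting from `Θ 0 = 0` it therefore stays in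
`(-1, ∞)`, where `x eˣ` is strictly increasing, so `Θ` is determined by `y`.
-/

open Set

theorem IsPreconnected.forall_lt_of_forall_ne {X α : Type*} [TopologicalSpace X] [LinearOrder α]
    [TopologicalSpace α] [OrderClosedTopology α] {s : Set X} (hs : IsPreconnected s)
    {f : X → α} (hf : ContinuousOn f s) {a : X} (ha : a ∈ s) {c : α} (hc : c < f a)
    (hne : ∀ x ∈ s, f x ≠ c) : ∀ x ∈ s, c < f x := by
  intro x hx
  by_contra! hle
  obtain ⟨z, hz, hfz⟩ := hs.intermediate_value hx ha hf ⟨hle, hc.le⟩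
  exact hne z hz hfz

namespace Real

theorem mul_exp_strictMonoOn_Ici : StrictMonoOn (fun x : ℝ => x * exp x) (Ici (-1)) := by
  refine strictMonoOn_of_deriv_pos (convex_Ici _) (by fun_prop) fun x hx => ?_
  rw [interior_Ici, mem_Ioi] at hx
  have hderiv : HasDerivAt (fun x : ℝ => x * exp x) ((x + 1) * exp x) x :=
    ((hasDerivAt_id' x).fun_mul (hasDerivAt_exp x)).congr_deriv (by ring)
  rw [hderiv.deriv]
  exact mul_pos (by linarith) (exp_pos x)

theorem neg_one_mul_exp_neg_one : -1 * exp (-1) = -(1 / exp 1) := by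
  rw [exp_neg]; ring

theorem neg_one_lt_of_continuousOn_of_mul_exp {s : Set ℝ} (hs : IsPreconnected s)
    {Θ : ℝ → ℝ} (hΘ : ContinuousOn Θ s) {a : ℝ} (ha : a ∈ s) (hΘa : -1 < Θ a)
    (hbranch : ∀ t ∈ s, -(1 / exp 1) < Θ t * exp (Θ t)) : ∀ t ∈ s, -1 < Θ t := by
  refine hs.forall_lt_of_forall_ne hΘ ha hΘa fun t ht hΘt => ?_
  have := hbranch t ht
  rw [hΘt, neg_one_mul_exp_neg_one] at this
  exact lt_irrefl _ this

end Real

theorem stmt9_general (T : ℝ)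
    (y : ℝ → ℝ)
    (hyb : ∀ t ∈ Icc (0:ℝ) T, -(1 / Real.exp 1) < y t) :
    (∀ Θ : ℝ → ℝ, ContinuousOn Θ (Icc 0 T) → Θ 0 = 0 →
      (∀ t ∈ Icc (0:ℝ) T, Θ t * Real.exp (Θ t) = y t) →
      ∀ t ∈ Icc (0:ℝ) T, -1 < Θ t) ∧
    (∀ Θ₁ Θ₂ : ℝ → ℝ,
      ContinuousOn Θ₁ (Icc 0 T) → Θ₁ 0 = 0 →
      (∀ t ∈ Icc (0:ℝ) T, Θ₁ t * Real.exp (Θ₁ t) = y t) →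
      ContinuousOn Θ₂ (Icc 0 T) → Θ₂ 0 = 0 →
      (∀ t ∈ Icc (0:ℝ) T, Θ₂ t * Real.exp (Θ₂ t) = y t) →
      ∀ t ∈ Icc (0:ℝ) T, Θ₁ t = Θ₂ t) := by
  have principal : ∀ Θ : ℝ → ℝ, ContinuousOn Θ (Icc 0 T) → Θ 0 = 0 →
      (∀ t ∈ Icc (0:ℝ) T, Θ t * Real.exp (Θ t) = y t) → ∀ t ∈ Icc (0:ℝ) T, -1 < Θ t :=
    fun Θ hΘ hΘ0 hΘy t ht =>
      Real.neg_one_lt_of_continuousOn_of_mul_exp isPreconnected_Icc hΘ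
        (left_mem_Icc.mpr (ht.1.trans ht.2)) (by rw [hΘ0]; norm_num)
        (fun s hs => hΘy s hs ▸ hyb s hs) t ht
  refine ⟨principal, fun Θ₁ Θ₂ h₁ h₁0 h₁y h₂ h₂0 h₂y t ht => ?_⟩
  exact Real.mul_exp_strictMonoOn_Ici.injOn (principal Θ₁ h₁ h₁0 h₁y t ht).le
    (principal Θ₂ h₂ h₂0 h₂y t ht).le ((h₁y t ht).trans (h₂y t ht).symm)

/-- If `y` is continuous on `[0,T]` with `y 0 = 0` and `y(t) > -1/e`, then every
continuous `Θ` with `Θ 0 = 0` and `Θ(t) e^{Θ(t)} = y(t)` satisfies `Θ(t) > -1`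
(i.e. `Θ = W₀ ∘ y`), and consequently any two such `Θ` coincide on `[0,T]`. -/
theorem stmt9 (T : ℝ) (hT : 0 ≤ T)
    (y : ℝ → ℝ) (hy : ContinuousOn y (Icc 0 T)) (hy0 : y 0 = 0)
    (hyb : ∀ t ∈ Icc (0:ℝ) T, -(1 / Real.exp 1) < y t) :
    (∀ Θ : ℝ → ℝ, ContinuousOn Θ (Icc 0 T) → Θ 0 = 0 →
      (∀ t ∈ Icc (0:ℝ) T, Θ t * Real.exp (Θ t) = y t) →
      ∀ t ∈ Icc (0:ℝ) T, -1 < Θ t) ∧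
    (∀ Θ₁ Θ₂ : ℝ → ℝ,
      ContinuousOn Θ₁ (Icc 0 T) → Θ₁ 0 = 0 →
      (∀ t ∈ Icc (0:ℝ) T, Θ₁ t * Real.exp (Θ₁ t) = y t) →
      ContinuousOn Θ₂ (Icc 0 T) → Θ₂ 0 = 0 →
      (∀ t ∈ Icc (0:ℝ) T, Θ₂ t * Real.exp (Θ₂ t) = y t) →
      ∀ t ∈ Icc (0:ℝ) T, Θ₁ t = Θ₂ t) :=
  stmt9_general T y hyb
end

section
/- Let L₁ > 0, λ > 0, 𝓕 > 0, and let Θ : [0,T] → ℝ be differentiable with Θ(0) = 0, 1 - 2λ·Θ(t) > 0 for all t ∈ [0,T], and Θ'(t) = (𝓕 + L₁·Θ(t)) / (1 - 2λ·Θ(t)) for all t ∈ [0,T]. Then for every t ∈ [0,T], ((L₁ + 2λ𝓕)/L₁²)·ln(1 + L₁·Θ(t)/𝓕) - (2λ/L₁)·Θ(t) = t. -/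
/-!
Put `u = 𝓕 + L₁Θ`. Along the solution `u' = L₁u/(1 - 2λΘ)`, so `u` cannot decrease while it is
positive and therefore stays positive. Where `𝓕 + L₁θ > 0` the first integral
`Φ(θ) = ((L₁ + 2λ𝓕)/L₁²) ln(1 + L₁θ/𝓕) - (2λ/L₁)θ` has derivative `(1 - 2λθ)/(𝓕 + L₁θ)`, the
reciprocal of the right-hand side of the equation; hence `(Φ ∘ Θ)' = 1` and `Φ(Θ(t)) = t`.
-/

open Set

theorem pos_of_hasDerivWithinAt_nonneg_of_pos {u u' : ℝ → ℝ} {a b : ℝ}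
    (hderiv : ∀ x ∈ Icc a b, HasDerivWithinAt u (u' x) (Icc a b) x)
    (hu' : ∀ x ∈ Icc a b, 0 < u x → 0 ≤ u' x) (ha : 0 < u a) :
    ∀ x ∈ Icc a b, 0 < u x := by
  have hcont : ContinuousOn u (Icc a b) := fun x hx => (hderiv x hx).continuousWithinAt
  by_contra! hneg
  -- `c = inf S` is the first point where `u ≤ 0`; `u` is monotone on `[a, c]`.
  set S := Icc a b ∩ u ⁻¹' Iic 0
  have hSclosed : IsClosed S := hcont.preimage_isClosed_of_isClosed isClosed_Icc isClosed_Iic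
  have hSbdd : BddBelow S := ⟨a, fun x hx => hx.1.1⟩
  have hcS : sInf S ∈ S := hSclosed.csInf_mem hneg hSbdd
  set c := sInf S
  obtain ⟨hcIcc, hc⟩ := hcS
  have hac : a < c := hcIcc.1.lt_of_ne fun hac => hc.not_gt (hac ▸ ha)
  have hsub : Icc a c ⊆ Icc a b := Icc_subset_Icc_right hcIcc.2
  have hpos_before : ∀ x ∈ Ico a c, 0 < u x := fun x hx => by
    by_contra! hx0
    exact hx.2.not_ge (csInf_le hSbdd ⟨hsub (Ico_subset_Icc_self hx), hx0⟩)
  have hmono : MonotoneOn u (Icc a c) := by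
    refine monotoneOn_of_hasDerivWithinAt_nonneg (convex_Icc a c) (hcont.mono hsub)
      (fun x hx => ?_) (fun x hx => ?_) (f' := u')
    · rw [interior_Icc] at hx ⊢
      exact (hderiv x (hsub (Ioo_subset_Icc_self hx))).mono (Ioo_subset_Icc_self.trans hsub)
    · rw [interior_Icc] at hx
      exact hu' x (hsub (Ioo_subset_Icc_self hx)) (hpos_before x (Ioo_subset_Ico_self hx))
  have := hmono (left_mem_Icc.2 hac.le) (right_mem_Icc.2 hac.le) hac.le
  exact hc.not_gt (ha.trans_le this)

noncomputable def firstIntegral (L₁ lam 𝓕 θ : ℝ) : ℝ :=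
  ((L₁ + 2 * lam * 𝓕) / L₁ ^ 2) * Real.log (1 + L₁ * θ / 𝓕) - (2 * lam / L₁) * θ

theorem hasDerivAt_firstIntegral {L₁ lam 𝓕 θ : ℝ} (hL : L₁ ≠ 0) (h𝓕 : 𝓕 ≠ 0)
    (hθ : 𝓕 + L₁ * θ ≠ 0) :
    HasDerivAt (firstIntegral L₁ lam 𝓕) ((1 - 2 * lam * θ) / (𝓕 + L₁ * θ)) θ := by
  have harg : 1 + L₁ * θ / 𝓕 = (𝓕 + L₁ * θ) / 𝓕 := by field_simp
  have hlog : HasDerivAt (fun θ => Real.log (1 + L₁ * θ / 𝓕)) (L₁ / (𝓕 + L₁ * θ)) θ := by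
    refine ((((hasDerivAt_id' θ).const_mul L₁).div_const 𝓕).const_add 1 |>.log
      (by rw [harg]; exact div_ne_zero hθ h𝓕)).congr_deriv ?_
    rw [harg]
    field_simp
  refine ((hlog.const_mul ((L₁ + 2 * lam * 𝓕) / L₁ ^ 2)).sub
    ((hasDerivAt_id' θ).const_mul (2 * lam / L₁))).congr_deriv ?_
  field_simp
  ring

theorem stmt10_general (T L₁ lam 𝓕 : ℝ)
    (hL : 0 < L₁) (h𝓕 : 0 < 𝓕)
    (Θ : ℝ → ℝ) (hΘ0 : Θ 0 = 0)
    (hden : ∀ t ∈ Icc (0:ℝ) T, 0 < 1 - 2 * lam * Θ t)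
    (hode : ∀ t ∈ Icc (0:ℝ) T,
      HasDerivWithinAt Θ ((𝓕 + L₁ * Θ t) / (1 - 2 * lam * Θ t)) (Icc 0 T) t) :
    ∀ t ∈ Icc (0:ℝ) T,
      ((L₁ + 2 * lam * 𝓕) / L₁ ^ 2) * Real.log (1 + L₁ * Θ t / 𝓕) -
        (2 * lam / L₁) * Θ t = t := by
  have hupos : ∀ t ∈ Icc (0:ℝ) T, 0 < 𝓕 + L₁ * Θ t :=
    pos_of_hasDerivWithinAt_nonneg_of_pos (fun t ht => ((hode t ht).const_mul L₁).const_add 𝓕)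
      (fun t ht hut => by have := hden t ht; positivity) (by simpa [hΘ0])
  have hderiv : ∀ t ∈ Icc (0:ℝ) T,
      HasDerivWithinAt (firstIntegral L₁ lam 𝓕 ∘ Θ) 1 (Icc 0 T) t := fun t ht =>
    ((hasDerivAt_firstIntegral hL.ne' h𝓕.ne' (hupos t ht).ne').comp_hasDerivWithinAt t
      (hode t ht)).congr_deriv
      (by rw [div_mul_div_cancel₀ (hupos t ht).ne', div_self (hden t ht).ne'])
  exact eq_of_has_deriv_right_eq (f' := fun _ => 1)
    (fun t ht => (hderiv t (Ico_subset_Icc_self ht)).mono_of_mem_nhdsWithin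
      (Icc_mem_nhdsGE_of_mem ht))
    (fun t _ => hasDerivWithinAt_id t _)
    (fun t ht => (hderiv t ht).continuousWithinAt) continuousOn_id (by simp [hΘ0])

/-- The solution of the Cauchy problem `Θ' = (𝓕 + L₁Θ)/(1 - 2λΘ)`, `Θ(0) = 0`,
satisfies the implicit first integral
`((L₁ + 2λ𝓕)/L₁²) ln(1 + L₁Θ(t)/𝓕) - (2λ/L₁)Θ(t) = t`. -/
theorem stmt10 (T L₁ lam 𝓕 : ℝ) (hT : 0 ≤ T)
    (hL : 0 < L₁) (hlam : 0 < lam) (h𝓕 : 0 < 𝓕)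
    (Θ : ℝ → ℝ) (hΘ0 : Θ 0 = 0)
    (hden : ∀ t ∈ Icc (0:ℝ) T, 0 < 1 - 2 * lam * Θ t)
    (hode : ∀ t ∈ Icc (0:ℝ) T,
      HasDerivWithinAt Θ ((𝓕 + L₁ * Θ t) / (1 - 2 * lam * Θ t)) (Icc 0 T) t) :
    ∀ t ∈ Icc (0:ℝ) T,
      ((L₁ + 2 * lam * 𝓕) / L₁ ^ 2) * Real.log (1 + L₁ * Θ t / 𝓕) -
        (2 * lam / L₁) * Θ t = t :=
  stmt10_general T L₁ lam 𝓕 hL h𝓕 Θ hΘ0 hden hode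
end

section
/- Let L₁ > 0, λ > 0, 𝓕 > 0, and let Θ : [0,T] → ℝ be differentiable with Θ(0) = 0, 1 - 2λ·Θ(t) > 0 for all t ∈ [0,T], and Θ'(t) = (𝓕 + L₁·Θ(t)) / (1 - 2λ·Θ(t)) for all t ∈ [0,T]. Then T < T* := ((L₁ + 2λ𝓕)/L₁²)·ln(1 + L₁/(2λ𝓕)) - 1/L₁. -/
/-!
Separation of variables: `levelTime θ = ∫₀^θ (1 - 2λs)/(𝓕 + L₁s) ds` is the time the solution
needs to climb from `0` to the level `θ`, so `levelTime (Θ t) = t` along the solution. The solution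
stays below the singular level `1/(2λ)`, and `levelTime` is strictly increasing up to that level,
hence `T = levelTime (Θ T) < levelTime (1/(2λ)) = T*`.
-/

open Set

section LevelTime

variable {L₁ lam 𝓕 : ℝ}

variable (L₁ lam 𝓕) in
noncomputable def levelTime (θ : ℝ) : ℝ :=
  (L₁ + 2 * lam * 𝓕) / L₁ ^ 2 * Real.log (1 + L₁ * θ / 𝓕) - 2 * lam / L₁ * θ

theorem levelTime_zero : levelTime L₁ lam 𝓕 0 = 0 := by
  simp [levelTime]

theorem levelTime_one_div_two_mul (hlam : lam ≠ 0) :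
    levelTime L₁ lam 𝓕 (1 / (2 * lam)) =
      (L₁ + 2 * lam * 𝓕) / L₁ ^ 2 * Real.log (1 + L₁ / (2 * lam * 𝓕)) - 1 / L₁ := by
  have harg : L₁ * (1 / (2 * lam)) / 𝓕 = L₁ / (2 * lam * 𝓕) := by ring
  have hlin : 2 * lam / L₁ * (1 / (2 * lam)) = 1 / L₁ := by field_simp
  rw [levelTime, harg, hlin]

theorem hasDerivAt_levelTime (hL : L₁ ≠ 0) (h𝓕 : 𝓕 ≠ 0) {θ : ℝ} (hθ : 𝓕 + L₁ * θ ≠ 0) :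
    HasDerivAt (levelTime L₁ lam 𝓕) ((1 - 2 * lam * θ) / (𝓕 + L₁ * θ)) θ := by
  have harg : 1 + L₁ * θ / 𝓕 ≠ 0 := by
    rwa [one_add_div h𝓕, div_ne_zero_iff, and_iff_left h𝓕]
  have hlin : HasDerivAt (fun θ => 1 + L₁ * θ / 𝓕) (L₁ / 𝓕) θ := by
    simpa using ((hasDerivAt_id θ).const_mul L₁).div_const 𝓕 |>.const_add 1
  refine (((hlin.log harg).const_mul ((L₁ + 2 * lam * 𝓕) / L₁ ^ 2)).sub
    ((hasDerivAt_id' θ).const_mul (2 * lam / L₁))).congr_deriv ?_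
  field_simp
  ring

theorem levelTime_strictMonoOn (hL : 0 < L₁) (hlam : 0 < lam) (h𝓕 : 0 < 𝓕) :
    StrictMonoOn (levelTime L₁ lam 𝓕) (Icc 0 (1 / (2 * lam))) := by
  have hderiv : ∀ θ ∈ Icc 0 (1 / (2 * lam)),
      HasDerivAt (levelTime L₁ lam 𝓕) ((1 - 2 * lam * θ) / (𝓕 + L₁ * θ)) θ := fun θ hθ =>
    hasDerivAt_levelTime hL.ne' h𝓕.ne' (by nlinarith [hθ.1])
  refine strictMonoOn_of_hasDerivWithinAt_pos (convex_Icc _ _)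
    (fun θ hθ => (hderiv θ hθ).continuousAt.continuousWithinAt)
    (fun θ hθ => (hderiv θ (interior_subset hθ)).hasDerivWithinAt) fun θ hθ => ?_
  rw [interior_Icc, mem_Ioo, lt_div_iff₀ (by positivity)] at hθ
  exact div_pos (by linarith) (by nlinarith)

end LevelTime

section Solution

variable {T L₁ lam 𝓕 : ℝ} {Θ : ℝ → ℝ}

/-- At a zero of `Θ` the right-hand side equals `𝓕 > 0`, so `Θ` cannot cross below `0`. -/
theorem nonneg_of_hasDerivWithinAt_blowUp (h𝓕 : 0 < 𝓕) (hΘ0 : Θ 0 = 0)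
    (hode : ∀ t ∈ Icc (0:ℝ) T,
      HasDerivWithinAt Θ ((𝓕 + L₁ * Θ t) / (1 - 2 * lam * Θ t)) (Icc 0 T) t) :
    ∀ t ∈ Icc (0:ℝ) T, 0 ≤ Θ t := by
  have hneg := image_le_of_deriv_right_lt_deriv_boundary' (f := fun t => -Θ t)
    (B := fun _ => 0) (B' := fun _ => 0)
    (fun t ht => (hode t ht).continuousWithinAt.neg)
    (fun t ht => ((hode t (Ico_subset_Icc_self ht)).mono_of_mem_nhdsWithin
      (Icc_mem_nhdsGE_of_mem ht)).neg)
    (by simp [hΘ0]) continuousOn_const (fun t _ => hasDerivWithinAt_const t _ 0)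
    (fun t _ hzero => by
      rw [neg_eq_zero.mp hzero]
      simpa using h𝓕)
  exact fun t ht => neg_nonpos.mp (hneg ht)

theorem levelTime_comp_eq_of_hasDerivWithinAt (hL : 0 < L₁) (h𝓕 : 0 < 𝓕) (hΘ0 : Θ 0 = 0)
    (hden : ∀ t ∈ Icc (0:ℝ) T, 0 < 1 - 2 * lam * Θ t)
    (hode : ∀ t ∈ Icc (0:ℝ) T,
      HasDerivWithinAt Θ ((𝓕 + L₁ * Θ t) / (1 - 2 * lam * Θ t)) (Icc 0 T) t) :
    ∀ t ∈ Icc (0:ℝ) T, levelTime L₁ lam 𝓕 (Θ t) = t := by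
  have hderiv : ∀ t ∈ Icc (0:ℝ) T,
      HasDerivWithinAt (fun t => levelTime L₁ lam 𝓕 (Θ t)) 1 (Icc 0 T) t := by
    intro t ht
    have hnum : 𝓕 + L₁ * Θ t ≠ 0 := by
      nlinarith [nonneg_of_hasDerivWithinAt_blowUp h𝓕 hΘ0 hode t ht]
    refine ((hasDerivAt_levelTime hL.ne' h𝓕.ne' hnum).comp_hasDerivWithinAt t
      (hode t ht)).congr_deriv ?_
    rw [div_mul_div_comm, mul_comm, div_self (mul_ne_zero hnum (hden t ht).ne')]
  have hright : ∀ t ∈ Ico (0:ℝ) T,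
      HasDerivWithinAt (fun t => levelTime L₁ lam 𝓕 (Θ t)) 1 (Ici t) t := fun t ht =>
    (hderiv t (Ico_subset_Icc_self ht)).mono_of_mem_nhdsWithin (Icc_mem_nhdsGE_of_mem ht)
  exact eq_of_has_deriv_right_eq hright (fun t _ => hasDerivWithinAt_id t _)
    (fun t ht => (hderiv t ht).continuousWithinAt) continuousOn_id
    (by simp [hΘ0, levelTime_zero])

end Solution

/-- Blow-up bound for the Cauchy problem `Θ' = (𝓕 + L₁Θ)/(1 - 2λΘ)`, `Θ(0) = 0`:
if the denominator stays positive on `[0,T]`, then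
`T < T* = ((L₁ + 2λ𝓕)/L₁²) ln(1 + L₁/(2λ𝓕)) - 1/L₁`. -/
theorem stmt11 (T L₁ lam 𝓕 : ℝ) (hT : 0 ≤ T)
    (hL : 0 < L₁) (hlam : 0 < lam) (h𝓕 : 0 < 𝓕)
    (Θ : ℝ → ℝ) (hΘ0 : Θ 0 = 0)
    (hden : ∀ t ∈ Icc (0:ℝ) T, 0 < 1 - 2 * lam * Θ t)
    (hode : ∀ t ∈ Icc (0:ℝ) T,
      HasDerivWithinAt Θ ((𝓕 + L₁ * Θ t) / (1 - 2 * lam * Θ t)) (Icc 0 T) t) :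
    T < ((L₁ + 2 * lam * 𝓕) / L₁ ^ 2) * Real.log (1 + L₁ / (2 * lam * 𝓕)) - 1 / L₁ := by
  have hTmem : T ∈ Icc (0:ℝ) T := ⟨hT, le_rfl⟩
  have hΘT_nonneg : 0 ≤ Θ T := nonneg_of_hasDerivWithinAt_blowUp h𝓕 hΘ0 hode T hTmem
  have hΘT_lt : Θ T < 1 / (2 * lam) := by
    rw [lt_div_iff₀ (by positivity)]
    linarith [hden T hTmem]
  calc T = levelTime L₁ lam 𝓕 (Θ T) :=
        (levelTime_comp_eq_of_hasDerivWithinAt hL h𝓕 hΘ0 hden hode T hTmem).symm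
    _ < levelTime L₁ lam 𝓕 (1 / (2 * lam)) :=
        levelTime_strictMonoOn hL hlam h𝓕 ⟨hΘT_nonneg, hΘT_lt.le⟩ ⟨by positivity, le_rfl⟩ hΘT_lt
    _ = _ := levelTime_one_div_two_mul hlam.ne'
end

section
/- Let T > 0 and let F, L : [0,T] → ℝ be continuous and non-negative. If x : [0,T] → ℝ is continuous and satisfies |x(t)| ≤ F(t) + L(t)·∫₀ᵗ |x(s)| ds for all t ∈ [0,T], then |x(t)| ≤ F(t) + L(t)·e^{∫₀ᵗ L(s)ds}·∫₀ᵗ F(s)·e^{-∫₀ˢ L(s₁)ds₁} ds for all t ∈ [0,T]. -/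
open Set intervalIntegral

/-!
Put `A(t) = ∫₀ᵗ L` and `u(t) = ∫₀ᵗ |x|`. The hypothesis says `u' ≤ F + L u`, so the derivative of
`e^{-A} u - ∫₀ᵗ F e^{-A}` is `e^{-A} (u' - L u - F) ≤ 0`; this function vanishes at `0`, which gives
`u(t) ≤ e^{A(t)} ∫₀ᵗ F e^{-A}`. Substituting back into `|x| ≤ F + L u` with `L ≥ 0` proves the bound.
-/

namespace ContinuousOn

variable {f : ℝ → ℝ} {a b : ℝ}

theorem continuousOn_primitive_Icc (hf : ContinuousOn f (Icc a b)) (hab : a ≤ b) :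
    ContinuousOn (fun t => ∫ s in a..t, f s) (Icc a b) := by
  rw [← uIcc_of_le hab] at hf ⊢
  exact continuousOn_primitive_interval (hf.integrableOn_compact isCompact_uIcc)

theorem hasDerivAt_primitive (hf : ContinuousOn f (Icc a b)) {t : ℝ} (ht : t ∈ Ioo a b) :
    HasDerivAt (fun r => ∫ s in a..r, f s) (f t) t :=
  integral_hasDerivAt_right
    ((hf.mono (uIcc_subset_Icc (left_mem_Icc.2 (ht.1.trans ht.2).le) (Ioo_subset_Icc_self ht)))
      |>.intervalIntegrable)
    ((hf.mono Ioo_subset_Icc_self).stronglyMeasurableAtFilter isOpen_Ioo t ht)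
    (hf.continuousAt (Icc_mem_nhds ht.1 ht.2))

end ContinuousOn

open Real in
/-- The right-hand side is the solution of `v' = f + L v`, `v(a) = u(a)`. -/
theorem le_exp_integral_mul_of_hasDerivAt_le {u u' f L : ℝ → ℝ} {a b : ℝ} (hab : a ≤ b)
    (hu : ContinuousOn u (Icc a b)) (hu' : ∀ t ∈ Ioo a b, HasDerivAt u (u' t) t)
    (hf : ContinuousOn f (Icc a b)) (hL : ContinuousOn L (Icc a b))
    (hbound : ∀ t ∈ Ioo a b, u' t ≤ f t + L t * u t) :
    u b ≤ exp (∫ s in a..b, L s) * (u a + ∫ s in a..b, f s * exp (-∫ r in a..s, L r)) := by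
  set A : ℝ → ℝ := fun t => ∫ s in a..t, L s
  set φ : ℝ → ℝ := fun s => f s * exp (-A s)
  set g : ℝ → ℝ := fun t => exp (-A t) * u t - ∫ s in a..t, φ s
  have hA : ContinuousOn A (Icc a b) := hL.continuousOn_primitive_Icc hab
  have hφ : ContinuousOn φ (Icc a b) := hf.mul (continuous_exp.comp_continuousOn hA.neg)
  have hg : ContinuousOn g (Icc a b) :=
    ((continuous_exp.comp_continuousOn hA.neg).mul hu).sub (hφ.continuousOn_primitive_Icc hab)
  have hg' : ∀ t ∈ Ioo a b, HasDerivAt g (exp (-A t) * (u' t - (f t + L t * u t))) t :=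
    fun t ht => (((hL.hasDerivAt_primitive ht).neg.exp).mul (hu' t ht)).sub
      (hφ.hasDerivAt_primitive ht) |>.congr_deriv (by simp only [φ, A, Pi.neg_apply]; ring)
  have hg_anti : AntitoneOn g (Icc a b) := by
    refine antitoneOn_of_hasDerivWithinAt_nonpos (convex_Icc a b) hg
      (fun t ht => (hg' t ?_).hasDerivWithinAt)
      (fun t ht => mul_nonpos_of_nonneg_of_nonpos (exp_pos _).le (sub_nonpos.2 (hbound t ?_))) <;>
      rwa [interior_Icc] at ht
  have hgb : exp (-A b) * u b ≤ u a + ∫ s in a..b, φ s := by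
    have := hg_anti (left_mem_Icc.2 hab) (right_mem_Icc.2 hab) hab
    simp only [g, A, integral_same, neg_zero, exp_zero, one_mul, sub_zero] at this
    linarith
  calc u b = exp (A b) * (exp (-A b) * u b) := by rw [← mul_assoc, ← exp_add]; simp
    _ ≤ exp (A b) * (u a + ∫ s in a..b, φ s) := by gcongr

theorem stmt16_general (T : ℝ)
    (F L : ℝ → ℝ)
    (hFc : ContinuousOn F (Icc 0 T))
    (hLc : ContinuousOn L (Icc 0 T)) (hLnn : ∀ t ∈ Icc (0:ℝ) T, 0 ≤ L t)
    (x : ℝ → ℝ) (hx : ContinuousOn x (Icc 0 T))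
    (hineq : ∀ t ∈ Icc (0:ℝ) T, |x t| ≤ F t + L t * ∫ s in (0:ℝ)..t, |x s|) :
    ∀ t ∈ Icc (0:ℝ) T,
      |x t| ≤ F t + L t * Real.exp (∫ s in (0:ℝ)..t, L s) *
        ∫ s in (0:ℝ)..t, F s * Real.exp (-∫ s₁ in (0:ℝ)..s, L s₁) := by
  intro t ht
  have hsub : Icc 0 t ⊆ Icc 0 T := Icc_subset_Icc le_rfl ht.2
  have hxt : ContinuousOn (fun s => |x s|) (Icc 0 t) := (hx.mono hsub).abs
  have hprimitive : (∫ s in (0:ℝ)..t, |x s|) ≤ Real.exp (∫ s in (0:ℝ)..t, L s) *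
      ∫ s in (0:ℝ)..t, F s * Real.exp (-∫ s₁ in (0:ℝ)..s, L s₁) := by
    simpa only [integral_same, zero_add] using
      le_exp_integral_mul_of_hasDerivAt_le ht.1 (hxt.continuousOn_primitive_Icc ht.1)
        (fun s hs => hxt.hasDerivAt_primitive hs) (hFc.mono hsub) (hLc.mono hsub)
        (fun s hs => hineq s (hsub (Ioo_subset_Icc_self hs)))
  calc |x t| ≤ F t + L t * ∫ s in (0:ℝ)..t, |x s| := hineq t ht
    _ ≤ _ := by rw [mul_assoc]; gcongr; exact hLnn t ht

/-- The best possible (unimprovable) estimate for continuous solutions of the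
linear integral inequality `|x(t)| ≤ F(t) + L(t) ∫₀ᵗ |x(s)| ds`:
`|x(t)| ≤ F(t) + L(t) e^{∫₀ᵗ L} ∫₀ᵗ F(s) e^{-∫₀ˢ L} ds`. -/
theorem stmt16 (T : ℝ) (hT : 0 < T)
    (F L : ℝ → ℝ)
    (hFc : ContinuousOn F (Icc 0 T)) (hFnn : ∀ t ∈ Icc (0:ℝ) T, 0 ≤ F t)
    (hLc : ContinuousOn L (Icc 0 T)) (hLnn : ∀ t ∈ Icc (0:ℝ) T, 0 ≤ L t)
    (x : ℝ → ℝ) (hx : ContinuousOn x (Icc 0 T))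
    (hineq : ∀ t ∈ Icc (0:ℝ) T, |x t| ≤ F t + L t * ∫ s in (0:ℝ)..t, |x s|) :
    ∀ t ∈ Icc (0:ℝ) T,
      |x t| ≤ F t + L t * Real.exp (∫ s in (0:ℝ)..t, L s) *
        ∫ s in (0:ℝ)..t, F s * Real.exp (-∫ s₁ in (0:ℝ)..s, L s₁) :=
  stmt16_general T F L hFc hLc hLnn x hx hineq
end

section
/- Let B > 0. Then: (i) for every α ∈ (0,B], sup_{β ∈ (0,B]} |β³ - α²·β| ≥ B³/4; and (ii) for α = (√3/2)·B, sup_{β ∈ (0,B]} |β³ - α²·β| = B³/4. Hence α* = (√3/2)B minimizes over α ∈ (0,B] the quantity max_{β∈(0,B]} |β³ - α²β|. -/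
open Set

/-!
Writing `α = √3 a`, the quantity is `|β³ - 3a²β|` on `(0, B]`. If `a ≤ B/2` the endpoint
`β = B` already gives `B³ - 3a²B ≥ B³/4`; otherwise the critical point `β = a` gives
`2a³ > B³/4`. For `a = B/2` the cubic is `(B³/4) T₃(β/B)` with `T₃` the Chebyshev
polynomial, which equioscillates between `±1` on `[0, 1]`, so `B³/4` is also an upper bound.
-/

lemma bddAbove_abs_cubic_image (B c : ℝ) :
    BddAbove ((fun β => |β ^ 3 - c * β|) '' Ioc 0 B) :=
  ((isCompact_Icc.image_of_continuousOn (by fun_prop)).bddAbove).mono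
    (image_mono Ioc_subset_Icc_self)

lemma le_sSup_abs_cubic {a B : ℝ} (hB : 0 < B) (ha : 0 ≤ a) (haB : a ≤ B) :
    B ^ 3 / 4 ≤ sSup ((fun β => |β ^ 3 - 3 * a ^ 2 * β|) '' Ioc 0 B) := by
  have hbdd := bddAbove_abs_cubic_image B (3 * a ^ 2)
  rcases le_or_gt a (B / 2) with hsmall | hlarge
  · refine le_csSup_of_le hbdd (mem_image_of_mem _ ⟨hB, le_rfl⟩) ((le_abs_self _).trans' ?_)
    nlinarith [mul_le_mul_of_nonneg_right (pow_le_pow_left₀ ha hsmall 2) hB.le]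
  · refine le_csSup_of_le hbdd (mem_image_of_mem _ ⟨by linarith, haB⟩) ?_
    rw [show a ^ 3 - 3 * a ^ 2 * a = -(2 * a ^ 3) by ring, abs_neg, abs_of_nonneg (by positivity)]
    nlinarith [pow_le_pow_left₀ (by positivity) hlarge.le 3]

lemma abs_chebyshev_cubic_le {B β : ℝ} (hβ : 0 ≤ β) (hβB : β ≤ B) :
    |β ^ 3 - 3 / 4 * B ^ 2 * β| ≤ B ^ 3 / 4 := by
  have hupper : B ^ 3 / 4 - (β ^ 3 - 3 / 4 * B ^ 2 * β) = (B - β) * (β + B / 2) ^ 2 := by ring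
  have hlower : β ^ 3 - 3 / 4 * B ^ 2 * β + B ^ 3 / 4 = (β + B) * (β - B / 2) ^ 2 := by ring
  rw [abs_le]
  constructor
  · nlinarith [mul_nonneg (by linarith : 0 ≤ β + B) (sq_nonneg (β - B / 2))]
  · nlinarith [mul_nonneg (sub_nonneg.mpr hβB) (sq_nonneg (β + B / 2))]

/-- Optimal test-signal amplitude for the quadratic model of the reference system:
(i) for every `α ∈ (0,B]`, `sup_{β ∈ (0,B]} |β³ - α²β| ≥ B³/4`;
(ii) for `α* = (√3/2)B` the supremum equals `B³/4`;
hence `α* = (√3/2)B` minimizes `max_{β ∈ (0,B]} |β³ - α²β|` over `α ∈ (0,B]`. -/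
theorem stmt17 (B : ℝ) (hB : 0 < B) :
    (∀ α ∈ Ioc (0:ℝ) B,
      B ^ 3 / 4 ≤ sSup ((fun β => |β ^ 3 - α ^ 2 * β|) '' Ioc 0 B)) ∧
    sSup ((fun β => |β ^ 3 - (Real.sqrt 3 / 2 * B) ^ 2 * β|) '' Ioc 0 B) = B ^ 3 / 4 := by
  have hsqrt : Real.sqrt 3 ^ 2 = 3 := Real.sq_sqrt (by norm_num)
  have hsqrt_ge_one : 1 ≤ Real.sqrt 3 := Real.one_le_sqrt.mpr (by norm_num)
  have hlower : ∀ α ∈ Ioc (0:ℝ) B,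
      B ^ 3 / 4 ≤ sSup ((fun β => |β ^ 3 - α ^ 2 * β|) '' Ioc 0 B) := by
    rintro α ⟨hα, hαB⟩
    have hα_sq : α ^ 2 = 3 * (α / Real.sqrt 3) ^ 2 := by rw [div_pow, hsqrt]; ring
    rw [hα_sq]
    exact le_sSup_abs_cubic hB (by positivity) ((div_le_self hα.le hsqrt_ge_one).trans hαB)
  have hα_star : Real.sqrt 3 / 2 * B ∈ Ioc (0:ℝ) B :=
    ⟨by positivity, by nlinarith [Real.sqrt_le_sqrt (by norm_num : (3:ℝ) ≤ 4)]⟩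
  refine ⟨hlower, le_antisymm ?_ (hlower _ hα_star)⟩
  rw [show (Real.sqrt 3 / 2 * B) ^ 2 = 3 / 4 * B ^ 2 by rw [mul_pow, div_pow, hsqrt]; ring]
  exact csSup_le ((nonempty_Ioc.mpr hB).image _)
    (forall_mem_image.mpr fun β hβ => abs_chebyshev_cubic_le hβ.1.le hβ.2)
end

section
/- Let B > 0 and set α₁* = (2√3 - 3)·B and α₂* = 2α₁* = (4√3 - 6)·B. Then: (i) sup_{β ∈ (0,B]} |β³ - (α₁* + α₂*)β² + α₁*α₂*·β| = (52 - 30√3)·B³; and (ii) for all α₁, α₂ ∈ (0,B], sup_{β ∈ (0,B]} |β³ - (α₁ + α₂)β² + α₁α₂·β| ≥ (52 - 30√3)·B³. -/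
/-!
The residual `β(β - α₁)(β - α₂)` is a monic cubic through the origin, so the difference of two
residuals is `β · (Dβ + E)` with `D, E` depending only on the amplitudes. For the optimal amplitudes
the residual equioscillates: it takes the values `M, -M, M` at `(3√3 - 5)B < (√3 - 1)B < B`, where
`M = (52 - 30√3)B³`, and stays in `[-M, M]` on `[0, B]`. If other amplitudes achieved a smaller
maximum, the affine function `Dβ + E` would be positive, negative, positive at these three points,
which is impossible.
-/

open Set

def cubicResidual (α₁ α₂ β : ℝ) : ℝ := β ^ 3 - (α₁ + α₂) * β ^ 2 + α₁ * α₂ * β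

theorem cubicResidual_sub_cubicResidual (α₁ α₂ α₁' α₂' β : ℝ) :
    cubicResidual α₁' α₂' β - cubicResidual α₁ α₂ β =
      β * ((α₁ + α₂ - α₁' - α₂') * β + (α₁' * α₂' - α₁ * α₂)) := by
  unfold cubicResidual
  ring

theorem continuous_cubicResidual (α₁ α₂ : ℝ) : Continuous (cubicResidual α₁ α₂) := by
  unfold cubicResidual
  fun_prop

theorem bddAbove_abs_cubicResidual_image_Ioc (α₁ α₂ B : ℝ) :
    BddAbove ((fun β => |cubicResidual α₁ α₂ β|) '' Ioc 0 B) :=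
  (isCompact_Icc.bddAbove_image (continuous_cubicResidual α₁ α₂).abs.continuousOn).mono
    (image_mono Ioc_subset_Icc_self)

theorem affine_pos_of_pos_of_pos {D E t₁ t₂ t₃ : ℝ} (h₁₂ : t₁ < t₂) (h₂₃ : t₂ < t₃)
    (h₁ : 0 < D * t₁ + E) (h₃ : 0 < D * t₃ + E) : 0 < D * t₂ + E := by
  have hcomb : (t₃ - t₁) * (D * t₂ + E) = (t₃ - t₂) * (D * t₁ + E) + (t₂ - t₁) * (D * t₃ + E) := by
    ring
  have hpos : 0 < (t₃ - t₁) * (D * t₂ + E) := by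
    rw [hcomb]
    have := mul_pos (sub_pos.2 h₂₃) h₁
    have := mul_pos (sub_pos.2 h₁₂) h₃
    linarith
  exact pos_of_mul_pos_right hpos (by linarith)

theorem le_abs_cubicResidual_of_equioscillation {α₁ α₂ α₁' α₂' t₁ t₂ t₃ M : ℝ}
    (ht₁ : 0 < t₁) (h₁₂ : t₁ < t₂) (h₂₃ : t₂ < t₃)
    (e₁ : cubicResidual α₁' α₂' t₁ = M) (e₂ : cubicResidual α₁' α₂' t₂ = -M)
    (e₃ : cubicResidual α₁' α₂' t₃ = M) :
    M ≤ |cubicResidual α₁ α₂ t₁| ∨ M ≤ |cubicResidual α₁ α₂ t₂| ∨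
      M ≤ |cubicResidual α₁ α₂ t₃| := by
  by_contra! h
  obtain ⟨h₁, h₂, h₃⟩ := h
  set D := α₁ + α₂ - α₁' - α₂'
  set E := α₁' * α₂' - α₁ * α₂
  have q₁ : 0 < t₁ * (D * t₁ + E) := by
    rw [← cubicResidual_sub_cubicResidual, e₁]; linarith [(abs_lt.1 h₁).2]
  have q₂ : t₂ * (D * t₂ + E) < 0 := by
    rw [← cubicResidual_sub_cubicResidual, e₂]; linarith [(abs_lt.1 h₂).1]
  have q₃ : 0 < t₃ * (D * t₃ + E) := by
    rw [← cubicResidual_sub_cubicResidual, e₃]; linarith [(abs_lt.1 h₃).2]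
  have hmid := affine_pos_of_pos_of_pos h₁₂ h₂₃ (pos_of_mul_pos_right q₁ ht₁.le)
    (pos_of_mul_pos_right q₃ (by linarith))
  linarith [mul_pos (ht₁.trans h₁₂) hmid]

theorem sqrt_three_bounds : 5 / 3 < √3 ∧ √3 < 26 / 15 :=
  ⟨Real.lt_sqrt_of_sq_lt (by norm_num), (Real.sqrt_lt' (by norm_num)).2 (by norm_num)⟩

section Optimal

variable (B β : ℝ)

theorem minimax_sub_cubicResidual_opt :
    (52 - 30 * √3) * B ^ 3 - cubicResidual ((2 * √3 - 3) * B) ((4 * √3 - 6) * B) β =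
      (B - β) * (β - (3 * √3 - 5) * B) ^ 2 := by
  have hs : √3 ^ 2 = 3 := Real.sq_sqrt (by norm_num)
  unfold cubicResidual
  linear_combination (-9 * B ^ 3 + β * B ^ 2) * hs

theorem cubicResidual_opt_add_minimax :
    cubicResidual ((2 * √3 - 3) * B) ((4 * √3 - 6) * B) β + (52 - 30 * √3) * B ^ 3 =
      (β - (√3 - 1) * B) ^ 2 * (β - (4 * √3 - 7) * B) := by
  have hs : √3 ^ 2 = 3 := Real.sq_sqrt (by norm_num)
  unfold cubicResidual
  linear_combination (-15 * B ^ 3 - β * B ^ 2 + 4 * √3 * B ^ 3) * hs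

end Optimal

theorem abs_cubicResidual_opt_le {B β : ℝ} (hβ : 0 ≤ β) (hβB : β ≤ B) :
    |cubicResidual ((2 * √3 - 3) * B) ((4 * √3 - 6) * B) β| ≤ (52 - 30 * √3) * B ^ 3 := by
  have hs := sqrt_three_bounds
  have hupper := minimax_sub_cubicResidual_opt B β
  have hlower := cubicResidual_opt_add_minimax B β
  have h₁ : 0 ≤ (B - β) * (β - (3 * √3 - 5) * B) ^ 2 :=
    mul_nonneg (by linarith) (sq_nonneg _)
  have h₂ : 0 ≤ (β - (√3 - 1) * B) ^ 2 * (β - (4 * √3 - 7) * B) :=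
    mul_nonneg (sq_nonneg _) (by nlinarith)
  rw [abs_le]
  constructor <;> linarith

/-- Optimal amplitudes for the quadratic product-integration model:
with `α₁* = (2√3 - 3)B` and `α₂* = 2α₁* = (4√3 - 6)B`,
(i) `sup_{β ∈ (0,B]} |β³ - (α₁* + α₂*)β² + α₁*α₂*β| = (52 - 30√3)B³`, and
(ii) for all `α₁, α₂ ∈ (0,B]`,
`sup_{β ∈ (0,B]} |β³ - (α₁+α₂)β² + α₁α₂β| ≥ (52 - 30√3)B³`. -/
theorem stmt18 (B : ℝ) (hB : 0 < B) :
    sSup ((fun β =>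
        |β ^ 3 - ((2 * Real.sqrt 3 - 3) * B + (4 * Real.sqrt 3 - 6) * B) * β ^ 2 +
          ((2 * Real.sqrt 3 - 3) * B) * ((4 * Real.sqrt 3 - 6) * B) * β|) '' Ioc 0 B) =
      (52 - 30 * Real.sqrt 3) * B ^ 3 ∧
    ∀ α₁ ∈ Ioc (0:ℝ) B, ∀ α₂ ∈ Ioc (0:ℝ) B,
      (52 - 30 * Real.sqrt 3) * B ^ 3 ≤
        sSup ((fun β => |β ^ 3 - (α₁ + α₂) * β ^ 2 + α₁ * α₂ * β|) '' Ioc 0 B) := by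
  obtain ⟨hs₁, hs₂⟩ := sqrt_three_bounds
  have hmax : cubicResidual ((2 * √3 - 3) * B) ((4 * √3 - 6) * B) B = (52 - 30 * √3) * B ^ 3 := by
    linarith [minimax_sub_cubicResidual_opt B B]
  refine ⟨IsGreatest.csSup_eq ⟨⟨B, right_mem_Ioc.2 hB, ?_⟩, ?_⟩, fun α₁ _ α₂ _ => ?_⟩
  · change |cubicResidual _ _ B| = _
    rw [hmax, abs_of_nonneg (mul_nonneg (by linarith) (by positivity))]
  · rintro _ ⟨β, hβ, rfl⟩
    exact abs_cubicResidual_opt_le hβ.1.le hβ.2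
  · have h₁ : cubicResidual ((2 * √3 - 3) * B) ((4 * √3 - 6) * B) ((3 * √3 - 5) * B) =
        (52 - 30 * √3) * B ^ 3 := by
      linarith [minimax_sub_cubicResidual_opt B ((3 * √3 - 5) * B)]
    have h₂ : cubicResidual ((2 * √3 - 3) * B) ((4 * √3 - 6) * B) ((√3 - 1) * B) =
        -((52 - 30 * √3) * B ^ 3) := by
      linarith [cubicResidual_opt_add_minimax B ((√3 - 1) * B)]
    have ht₁ : 0 < (3 * √3 - 5) * B := by nlinarith
    have h₁₂ : (3 * √3 - 5) * B < (√3 - 1) * B := by nlinarith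
    have h₂₃ : (√3 - 1) * B < B := by nlinarith
    have hbdd := bddAbove_abs_cubicResidual_image_Ioc α₁ α₂ B
    rcases le_abs_cubicResidual_of_equioscillation (α₁ := α₁) (α₂ := α₂) ht₁ h₁₂ h₂₃ h₁ h₂ hmax
      with h | h | h
    · exact le_csSup_of_le hbdd ⟨_, ⟨ht₁, by linarith⟩, rfl⟩ h
    · exact le_csSup_of_le hbdd ⟨_, ⟨by linarith, h₂₃.le⟩, rfl⟩ h
    · exact le_csSup_of_le hbdd ⟨_, right_mem_Ioc.2 hB, rfl⟩ h
end
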